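/- arXiv:2007.09024 — 7 statements merged into one kernel-verified Lean document; each statement's English description precedes it below -/
import Mathlib

section
/- Let $\mathscr{T}$ be a $p$th order ($p\ge 3$) odeco tensor of dimension $d\times\cdots\times d$ whose essential singular values are all equal to $\lambda\ge 0$. Then $\min_{x^{(1)}\in S^{d-1}}\max_{x^{(2)},\ldots,x^{(p)}\in S^{d-1}}\langle \mathscr{T}, x^{(1)}\otimes\cdots\otimes x^{(p)}\rangle = \lambda/\sqrt{d}$. -/
open Finset Real

/-- Inner product of a `p`-th order tensor with a rank-one tensor `x 0 ⊗ ⋯ ⊗ x (p-1)`. -/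
noncomputable def tInner {p d : ℕ} (T : (Fin p → Fin d) → ℝ) (x : Fin p → Fin d → ℝ) : ℝ :=
  ∑ i : Fin p → Fin d, T i * ∏ q, x q (i q)

/-- Membership in the unit sphere `S^{d-1}`. -/
def UnitVec {d : ℕ} (x : Fin d → ℝ) : Prop := ∑ j, x j ^ 2 = 1

/-! In the coordinates `c_q = U_q x⁽q⁾` given by the orthonormal bases (the rows of `u q`), the
form becomes `λ ∑ₖ ∏_q c_q(k)` with every `c_q` a unit vector. For fixed `c_1`, bounding the
factors `c_4, …, c_p` by one and applying Cauchy–Schwarz to `c_2, c_3` gives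
`∑ₖ ∏_q c_q(k) ≤ ‖c_1‖_∞`, with equality when `c_2, …, c_p` are concentrated on a coordinate where
`|c_1(k)|` is maximal. So the inner maximum is `λ ‖U_1 x⁽¹⁾‖_∞`, and a unit vector has sup norm
at least `1/√d`, with equality for the constant vector. -/

open Matrix

lemma mul_transpose_eq_one_of_orthonormal_rows {R n : Type*} [CommSemiring R] [Fintype n]
    [DecidableEq n] {u : n → n → R} (hu : ∀ k l, (∑ j, u k j * u l j) = if k = l then 1 else 0) :
    of u * (of u)ᵀ = 1 := by
  ext k l
  simpa [mul_apply, one_apply] using hu k l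

lemma unitVec_iff_dotProduct_self {d : ℕ} (x : Fin d → ℝ) : UnitVec x ↔ x ⬝ᵥ x = 1 := by
  simp only [UnitVec, dotProduct, sq]

lemma dotProduct_mulVec_mulVec_of_transpose_mul_self {R n : Type*} [CommSemiring R] [Fintype n]
    [DecidableEq n] {A : Matrix n n R} (hA : Aᵀ * A = 1) (x y : n → R) :
    (A *ᵥ x) ⬝ᵥ (A *ᵥ y) = x ⬝ᵥ y := by
  rw [dotProduct_mulVec, ← vecMul_transpose, vecMul_vecMul, hA, vecMul_one]

lemma unitVec_mulVec_iff {d : ℕ} {A : Matrix (Fin d) (Fin d) ℝ} (hA : Aᵀ * A = 1)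
    (x : Fin d → ℝ) : UnitVec (A *ᵥ x) ↔ UnitVec x := by
  simp only [unitVec_iff_dotProduct_self, dotProduct_mulVec_mulVec_of_transpose_mul_self hA]

lemma unitVec_single {d : ℕ} (k : Fin d) {a : ℝ} (ha : a ^ 2 = 1) :
    UnitVec (Pi.single k a) := by
  simp [UnitVec, Pi.single_apply, ha]

lemma abs_le_one_of_unitVec {d : ℕ} {x : Fin d → ℝ} (hx : UnitVec x) (k : Fin d) :
    |x k| ≤ 1 := by
  rw [← sq_le_one_iff_abs_le_one, ← hx]
  exact Finset.single_le_sum (f := fun j => x j ^ 2) (fun j _ => sq_nonneg _) (mem_univ k)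

lemma sum_abs_mul_abs_le_one {d : ℕ} {x y : Fin d → ℝ} (hx : UnitVec x) (hy : UnitVec y) :
    ∑ k, |x k| * |y k| ≤ 1 := by
  have := Finset.sum_mul_sq_le_sq_mul_sq univ (fun k => |x k|) (fun k => |y k|)
  simp only [sq_abs] at this
  rw [hx, hy, one_mul] at this
  exact (le_abs_self _).trans ((sq_le_one_iff_abs_le_one _).mp this)

lemma inv_sqrt_le_norm_of_unitVec {d : ℕ} {x : Fin d → ℝ} (hx : UnitVec x) :
    (√d)⁻¹ ≤ ‖x‖ := by
  have h : 1 ≤ d * ‖x‖ ^ 2 := by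
    calc (1 : ℝ) = ∑ k, x k ^ 2 := hx.symm
      _ ≤ ∑ _k : Fin d, ‖x‖ ^ 2 := by
        refine sum_le_sum fun k _ => ?_
        rw [← sq_abs, ← Real.norm_eq_abs]
        exact pow_le_pow_left₀ (norm_nonneg _) (norm_le_pi_norm x k) 2
      _ = d * ‖x‖ ^ 2 := by simp
  have h' : 1 ≤ √d * ‖x‖ := by
    rw [← Real.sqrt_sq (norm_nonneg x), ← Real.sqrt_mul' _ (sq_nonneg _)]
    exact Real.one_le_sqrt.mpr h
  have hd : 0 < √d := (Real.sqrt_nonneg _).lt_of_ne fun h0 => by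
    rw [← h0, zero_mul] at h'
    linarith
  exact (inv_le_iff_one_le_mul₀' hd).mpr h'

lemma unitVec_const_inv_sqrt {d : ℕ} (hd : 0 < d) : UnitVec fun _ : Fin d => (√d)⁻¹ := by
  have : (d : ℝ) ≠ 0 := by positivity
  simp [UnitVec, inv_pow, Real.sq_sqrt, this]

lemma abs_prod_le_of_unitVec {P : Type*} [Fintype P] [DecidableEq P] {d : ℕ}
    {c : P → Fin d → ℝ} {q₀ q₁ q₂ : P} (h₀₁ : q₀ ≠ q₁) (h₀₂ : q₀ ≠ q₂) (h₁₂ : q₁ ≠ q₂)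
    (hc : ∀ q ≠ q₀, UnitVec (c q)) (k : Fin d) :
    |∏ q, c q k| ≤ |c q₀ k| * (|c q₁ k| * |c q₂ k|) := by
  rw [abs_prod, ← prod_pair (f := fun q => |c q k|) h₁₂,
    ← prod_insert (f := fun q => |c q k|) (by simp [h₀₁, h₀₂])]
  exact prod_le_prod_of_subset_of_le_one (subset_univ _) (fun q _ => abs_nonneg _)
    fun q _ hq => abs_le_one_of_unitVec (hc q fun h => hq (by simp [h])) k

lemma sum_prod_le_norm {P : Type*} [Fintype P] [DecidableEq P] {d : ℕ}
    {c : P → Fin d → ℝ} {q₀ q₁ q₂ : P} (h₀₁ : q₀ ≠ q₁) (h₀₂ : q₀ ≠ q₂) (h₁₂ : q₁ ≠ q₂)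
    (hc : ∀ q ≠ q₀, UnitVec (c q)) :
    ∑ k, ∏ q, c q k ≤ ‖c q₀‖ :=
  calc ∑ k, ∏ q, c q k ≤ ∑ k, ‖c q₀‖ * (|c q₁ k| * |c q₂ k|) := by
        refine sum_le_sum fun k _ =>
          (le_abs_self _).trans ((abs_prod_le_of_unitVec h₀₁ h₀₂ h₁₂ hc k).trans ?_)
        gcongr
        exact norm_le_pi_norm (c q₀) k
    _ = ‖c q₀‖ * ∑ k, |c q₁ k| * |c q₂ k| := (mul_sum ..).symm
    _ ≤ ‖c q₀‖ := mul_le_of_le_one_right (norm_nonneg _)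
        (sum_abs_mul_abs_le_one (hc q₁ h₀₁.symm) (hc q₂ h₀₂.symm))

lemma exists_sum_prod_eq_norm {P : Type*} [Fintype P] [DecidableEq P] {d : ℕ} (hd : 0 < d)
    {q₀ q₁ : P} (h₀₁ : q₀ ≠ q₁) (c₀ : Fin d → ℝ) :
    ∃ c : P → Fin d → ℝ, c q₀ = c₀ ∧ (∀ q ≠ q₀, UnitVec (c q)) ∧ ∑ k, ∏ q, c q k = ‖c₀‖ := by
  have : Nonempty (Fin d) := ⟨⟨0, hd⟩⟩
  obtain ⟨k₀, hk₀ : ‖c₀ k₀‖ = ‖c₀‖⟩ := (IsGreatest.pi_norm c₀).1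
  obtain ⟨s, hs, hsc⟩ : ∃ s : ℝ, s ^ 2 = 1 ∧ c₀ k₀ * s = ‖c₀‖ := by
    rw [← hk₀, Real.norm_eq_abs]
    rcases abs_choice (c₀ k₀) with h | h
    · exact ⟨1, by norm_num, by rw [h, mul_one]⟩
    · exact ⟨-1, by norm_num, by rw [h, mul_neg_one]⟩
  let c : P → Fin d → ℝ :=
    Function.update (Function.update (fun _ => Pi.single k₀ 1) q₁ (Pi.single k₀ s)) q₀ c₀
  refine ⟨c, by simp [c], fun q hq => ?_, ?_⟩
  · by_cases h : q = q₁
    · subst h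
      simpa [c, hq] using unitVec_single k₀ hs
    · simpa [c, hq, h] using unitVec_single k₀ (one_pow 2)
  · rw [sum_eq_single k₀ ?_ (by simp), ← mul_prod_erase _ _ (mem_univ q₀),
      ← mul_prod_erase _ _ (mem_erase.mpr ⟨h₀₁.symm, mem_univ q₁⟩), prod_eq_one]
    · simpa [c, h₀₁.symm] using hsc
    · intro q hq
      simp only [mem_erase] at hq
      simp [c, hq.1, hq.2.1]
    · intro k _ hk
      exact prod_eq_zero (mem_univ q₁) (by simp [c, h₀₁.symm, hk])

lemma tInner_eq_sum_prod_mulVec {p d : ℕ} (w : Fin d → ℝ) (u : Fin p → Fin d → Fin d → ℝ)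
    {T : (Fin p → Fin d) → ℝ} (hT : ∀ i, T i = ∑ k, w k * ∏ q, u q k (i q))
    (x : Fin p → Fin d → ℝ) :
    tInner T x = ∑ k, w k * ∏ q, (of (u q) *ᵥ x q) k := by
  simp only [tInner, hT, sum_mul, mul_assoc, ← prod_mul_distrib]
  rw [sum_comm]
  refine sum_congr rfl fun k _ => ?_
  rw [← mul_sum]
  simp only [mulVec, dotProduct, of_apply]
  rw [prod_univ_sum, Fintype.piFinset_univ]

lemma sSup_tInner_eq {p d : ℕ} (hd : 0 < d) {lam : ℝ} (hlam : 0 ≤ lam)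
    {u : Fin p → Fin d → Fin d → ℝ} (hu : ∀ q, of (u q) * (of (u q))ᵀ = 1)
    {T : (Fin p → Fin d) → ℝ} (hT : ∀ i, T i = ∑ k, lam * ∏ q, u q k (i q))
    {q₀ q₁ q₂ : Fin p} (h₀₁ : q₀ ≠ q₁) (h₀₂ : q₀ ≠ q₂) (h₁₂ : q₁ ≠ q₂)
    {x₀ : Fin d → ℝ} (hx₀ : UnitVec x₀) :
    sSup {v | ∃ x : Fin p → Fin d → ℝ, (∀ q, UnitVec (x q)) ∧ x q₀ = x₀ ∧ v = tInner T x}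
      = lam * ‖of (u q₀) *ᵥ x₀‖ := by
  have hu' q : (of (u q))ᵀ * of (u q) = 1 := mul_eq_one_comm.mp (hu q)
  have hT' x : tInner T x = lam * ∑ k, ∏ q, (of (u q) *ᵥ x q) k := by
    rw [tInner_eq_sum_prod_mulVec (fun _ => lam) u hT, mul_sum]
  refine IsGreatest.csSup_eq ⟨?_, ?_⟩
  · obtain ⟨c, hc₀, hc, hsum⟩ := exists_sum_prod_eq_norm hd h₀₁ (of (u q₀) *ᵥ x₀)
    have hcoord q : of (u q) *ᵥ Function.update (fun q => (of (u q))ᵀ *ᵥ c q) q₀ x₀ q = c q := by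
      by_cases h : q = q₀
      · subst h
        simp [hc₀]
      · simp [h, mulVec_mulVec, hu]
    refine ⟨Function.update (fun q => (of (u q))ᵀ *ᵥ c q) q₀ x₀, fun q => ?_, by simp, ?_⟩
    · rw [← unitVec_mulVec_iff (hu' q), hcoord]
      by_cases h : q = q₀
      · rw [h, hc₀, unitVec_mulVec_iff (hu' q₀)]
        exact hx₀
      · exact hc q h
    · simp only [hT', hcoord, hsum]
  · rintro v ⟨x, hx, rfl, rfl⟩
    rw [hT']
    refine mul_le_mul_of_nonneg_left (sum_prod_le_norm h₀₁ h₀₂ h₁₂ fun q _ => ?_) hlam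
    exact (unitVec_mulVec_iff (hu' q) _).mpr (hx q)

/-- For a `p`-th order (`p ≥ 3`) odeco tensor of dimension `d × ⋯ × d` whose essential
singular values are all equal to `λ ≥ 0`,
`min_{x⁽¹⁾ ∈ S^{d-1}} max_{x⁽²⁾,…,x⁽ᵖ⁾ ∈ S^{d-1}} ⟨T, x⁽¹⁾ ⊗ ⋯ ⊗ x⁽ᵖ⁾⟩ = λ/√d`. -/
theorem stmt0 (p d : ℕ) (hp : 3 ≤ p) (hd : 0 < d) (lam : ℝ) (hlam : 0 ≤ lam)
    (u : Fin p → Fin d → Fin d → ℝ)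
    (hu : ∀ q k l, (∑ j, u q k j * u q l j) = if k = l then 1 else 0)
    (T : (Fin p → Fin d) → ℝ)
    (hT : ∀ i, T i = ∑ k, lam * ∏ q, u q k (i q)) :
    sInf { m | ∃ x1 : Fin d → ℝ, UnitVec x1 ∧
      m = sSup { v | ∃ x : Fin p → Fin d → ℝ, (∀ q, UnitVec (x q)) ∧
          x ⟨0, by omega⟩ = x1 ∧ v = tInner T x } } = lam / Real.sqrt d := by
  have hu' q : of (u q) * (of (u q))ᵀ = 1 := mul_transpose_eq_one_of_orthonormal_rows (hu q)
  have hmax {x₀ : Fin d → ℝ} (hx₀ : UnitVec x₀) :=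
    sSup_tInner_eq hd hlam hu' hT (q₀ := ⟨0, by omega⟩) (q₁ := ⟨1, by omega⟩)
      (q₂ := ⟨2, by omega⟩) (by simp) (by simp) (by simp) hx₀
  set A := of (u ⟨0, by omega⟩)
  have hAt : Aᵀᵀ * Aᵀ = 1 := by simpa using hu' _
  have hA : Aᵀ * A = 1 := mul_eq_one_comm.mp (hu' _)
  rw [div_eq_mul_inv]
  refine IsLeast.csInf_eq ⟨⟨Aᵀ *ᵥ fun _ => (√d)⁻¹, ?_, ?_⟩, ?_⟩
  · exact (unitVec_mulVec_iff hAt _).mpr (unitVec_const_inv_sqrt hd)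
  · have : Nonempty (Fin d) := ⟨⟨0, hd⟩⟩
    rw [hmax ((unitVec_mulVec_iff hAt _).mpr (unitVec_const_inv_sqrt hd)), mulVec_mulVec,
      hu', one_mulVec, pi_norm_const, norm_inv, Real.norm_of_nonneg (Real.sqrt_nonneg _)]
  · rintro m ⟨x₀, hx₀, rfl⟩
    rw [hmax hx₀]
    exact mul_le_mul_of_nonneg_left
      (inv_sqrt_le_norm_of_unitVec ((unitVec_mulVec_iff hA x₀).mpr hx₀)) hlam
end

section
/- For the third-order tensors $\mathscr{T}=2\,e_1\otimes e_1\otimes e_1$ and $\tilde{\mathscr{T}}=(e_1+e_2)^{\otimes 3}+(e_1-e_2)^{\otimes 3}$ in $\mathbb{R}^{2\times 2\times 2}$, the difference satisfies $\tilde{\mathscr{T}}-\mathscr{T}=2(e_2\otimes e_2\otimes e_1+e_2\otimes e_1\otimes e_2+e_1\otimes e_2\otimes e_2)$, and the singular values of $\tilde{\mathscr{T}}$ in its orthogonal decomposition $\tilde{\mathscr{T}}=2\sqrt{2}\,v_+^{\otimes 3}+2\sqrt{2}\,v_-^{\otimes 3}$ with $v_\pm=(e_1\pm e_2)/\sqrt{2}$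 are both $2\sqrt{2}$, so that $\max\{|\lambda_1-\tilde\lambda_1|,|\lambda_2-\tilde\lambda_2|\}=2\sqrt{2}$ where $(\lambda_1,\lambda_2)=(2,0)$. -/
open Finset Real

/-- Third-order tensor product of three vectors in `ℝ²`. -/
def otimes3 (u v w : Fin 2 → ℝ) : Fin 2 → Fin 2 → Fin 2 → ℝ :=
  fun i j k => u i * v j * w k

/-- Standard basis vectors of `ℝ²`. -/
def e (i : Fin 2) : Fin 2 → ℝ := fun j => if j = i then 1 else 0

-- Expanding both cubes, the terms with an odd number of factors `v` cancel.
lemma otimes3_add_cube_add_otimes3_sub_cube (u v : Fin 2 → ℝ) (i j k : Fin 2) :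
    otimes3 (fun m => u m + v m) (fun m => u m + v m) (fun m => u m + v m) i j k +
      otimes3 (fun m => u m - v m) (fun m => u m - v m) (fun m => u m - v m) i j k =
    2 * otimes3 u u u i j k +
      2 * (otimes3 v v u i j k + otimes3 v u v i j k + otimes3 u v v i j k) := by
  simp only [otimes3]
  ring

lemma otimes3_div (u v w : Fin 2 → ℝ) (r : ℝ) (i j k : Fin 2) :
    otimes3 (fun m => u m / r) (fun m => v m / r) (fun m => w m / r) i j k =
      otimes3 u v w i j k / r ^ 3 := by
  simp only [otimes3]
  ring

lemma sqrt_two_pow_three : √2 ^ 3 = 2 * √2 := by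
  rw [pow_succ, sq_sqrt zero_le_two]

lemma two_sqrt_two_mul_otimes3_div_sqrt_two (u : Fin 2 → ℝ) (i j k : Fin 2) :
    2 * √2 * otimes3 (fun m => u m / √2) (fun m => u m / √2) (fun m => u m / √2) i j k =
      otimes3 u u u i j k := by
  rw [otimes3_div, sqrt_two_pow_three]
  field_simp

lemma one_le_sqrt_two : 1 ≤ √2 := by
  rw [one_le_sqrt]
  norm_num

/-- For `T = 2 e₁⊗e₁⊗e₁` and `T̃ = (e₁+e₂)^{⊗3} + (e₁-e₂)^{⊗3}`:
the difference is `2(e₂⊗e₂⊗e₁ + e₂⊗e₁⊗e₂ + e₁⊗e₂⊗e₂)`, `T̃` has the odeco decomposition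
`2√2 v₊^{⊗3} + 2√2 v₋^{⊗3}` with `v± = (e₁ ± e₂)/√2`, and
`max{|λ₁-λ̃₁|, |λ₂-λ̃₂|} = 2√2` with `(λ₁,λ₂) = (2,0)` and `(λ̃₁,λ̃₂) = (2√2,2√2)`. -/
theorem stmt2
    (T Tt : Fin 2 → Fin 2 → Fin 2 → ℝ)
    (hT : ∀ i j k, T i j k = 2 * otimes3 (e 0) (e 0) (e 0) i j k)
    (hTt : ∀ i j k, Tt i j k =
      otimes3 (fun m => e 0 m + e 1 m) (fun m => e 0 m + e 1 m) (fun m => e 0 m + e 1 m) i j k +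
      otimes3 (fun m => e 0 m - e 1 m) (fun m => e 0 m - e 1 m) (fun m => e 0 m - e 1 m) i j k) :
    (∀ i j k, Tt i j k - T i j k =
      2 * (otimes3 (e 1) (e 1) (e 0) i j k + otimes3 (e 1) (e 0) (e 1) i j k +
           otimes3 (e 0) (e 1) (e 1) i j k)) ∧
    (∀ i j k, Tt i j k =
      2 * Real.sqrt 2 * otimes3 (fun m => (e 0 m + e 1 m) / Real.sqrt 2)
          (fun m => (e 0 m + e 1 m) / Real.sqrt 2) (fun m => (e 0 m + e 1 m) / Real.sqrt 2) i j k +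
      2 * Real.sqrt 2 * otimes3 (fun m => (e 0 m - e 1 m) / Real.sqrt 2)
          (fun m => (e 0 m - e 1 m) / Real.sqrt 2) (fun m => (e 0 m - e 1 m) / Real.sqrt 2) i j k) ∧
    max |(2 : ℝ) - 2 * Real.sqrt 2| |(0 : ℝ) - 2 * Real.sqrt 2| = 2 * Real.sqrt 2 := by
  refine ⟨fun i j k => ?_, fun i j k => ?_, ?_⟩
  · rw [hT, hTt, otimes3_add_cube_add_otimes3_sub_cube]
    ring
  · rw [hTt, two_sqrt_two_mul_otimes3_div_sqrt_two, two_sqrt_two_mul_otimes3_div_sqrt_two]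
  · have h1 := one_le_sqrt_two
    have hle : |2 - 2 * √2| ≤ 2 * √2 := abs_sub_le_iff.2 ⟨by linarith, by linarith⟩
    rw [zero_sub, abs_neg, abs_of_pos (show (0 : ℝ) < 2 * √2 by positivity), max_eq_right hle]
end

section
/- Let $\mathscr{X}=\sum_{k=1}^r \eta_k\, a_k^{(1)}\otimes\cdots\otimes a_k^{(p)}$ with $\eta_1\ge\cdots\ge\eta_r>0$ and unit vectors $a_k^{(q)}$, where for each $q$ the matrix $A^{(q)}=[a_1^{(q)}\cdots a_r^{(q)}]$ has all singular values in $[1-\delta,1+\delta]$ for some $0\le\delta<1$. Let $U^{(q)}$ be the polar factor of $A^{(q)}$ with columns $u_k^{(q)}$, and set $\mathscr{T}=\sum_{k=1}^r\eta_k\, u_k^{(1)}\otimes\cdots\otimes u_k^{(p)}$. Then $\|\mathscr{X}-\mathscr{T}\|\le(p+1)\delta\,\eta_1$ in tensor spectral norm. -/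
open Finset Real Matrix

/-- Tensor spectral norm. -/
noncomputable def specNorm {p d : ℕ} (T : (Fin p → Fin d) → ℝ) : ℝ :=
  sSup { v | ∃ x : Fin p → Fin d → ℝ, (∀ q, UnitVec (x q)) ∧ v = tInner T x }

/-!
Pair `X - T` with unit vectors `x⁽¹⁾, …, x⁽ᵖ⁾`. Writing `α⁽q⁾ = A⁽q⁾ᵀ x⁽q⁾` and
`β⁽q⁾ = U⁽q⁾ᵀ x⁽q⁾`, the pairing is `∑ₖ ηₖ (∏_q α⁽q⁾ₖ - ∏_q β⁽q⁾ₖ)`, and every entry of `α⁽q⁾`,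
`β⁽q⁾` lies in `[-1, 1]` because the columns of `A⁽q⁾` and `U⁽q⁾` are unit vectors.
The eigenvalues of `P = (AᵀA)^{1/2}` lie in `[1 - δ, 1 + δ]`, so `‖P - 1‖ ≤ δ`, and `A = U P` gives
`‖α⁽q⁾ - β⁽q⁾‖ = ‖(P - 1) Uᵀ x⁽q⁾‖ ≤ δ`; also `‖α⁽q⁾‖ ≤ 1 + δ` and `‖β⁽q⁾‖ ≤ 1`.
Peeling off the first mode,
`∏ α - ∏ β = (α⁽¹⁾ - β⁽¹⁾) ∏_{q>1} α⁽q⁾ + β⁽¹⁾ (∏_{q>1} α⁽q⁾ - ∏_{q>1} β⁽q⁾)`,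
and Cauchy–Schwarz bounds the first part by `η₁ δ (1 + δ)` (through `|∏_{q>1} α⁽q⁾| ≤ |α⁽²⁾|`)
and each of the `p - 1` modes of the second part by `η₁ δ` (through `|β⁽¹⁾|`):
the total is `η₁ δ (p + δ) ≤ (p + 1) δ η₁`.
-/

open scoped Matrix.Norms.L2Operator

lemma abs_prod_sub_prod_le {ι : Type*} (s : Finset ι) {a b : ι → ℝ}
    (ha : ∀ i ∈ s, |a i| ≤ 1) (hb : ∀ i ∈ s, |b i| ≤ 1) :
    |∏ i ∈ s, a i - ∏ i ∈ s, b i| ≤ ∑ i ∈ s, |a i - b i| := by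
  classical
  induction s using Finset.induction_on with
  | empty => simp
  | insert j s hj ih =>
    have ha' := fun i hi => ha i (mem_insert_of_mem hi)
    have hb' := fun i hi => hb i (mem_insert_of_mem hi)
    have hprod : |∏ i ∈ s, a i| ≤ 1 := by
      rw [abs_prod]; exact prod_le_one (fun _ _ => abs_nonneg _) ha'
    rw [prod_insert hj, prod_insert hj, sum_insert hj]
    calc |a j * ∏ i ∈ s, a i - b j * ∏ i ∈ s, b i|
        = |(a j - b j) * ∏ i ∈ s, a i + b j * (∏ i ∈ s, a i - ∏ i ∈ s, b i)| := by ring_nf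
      _ ≤ |a j - b j| * |∏ i ∈ s, a i| + |b j| * |∏ i ∈ s, a i - ∏ i ∈ s, b i| := by
        rw [← abs_mul, ← abs_mul]; exact abs_add_le _ _
      _ ≤ |a j - b j| * 1 + 1 * ∑ i ∈ s, |a i - b i| := by
        gcongr
        · exact hb j (mem_insert_self j s)
        · exact ih ha' hb'
      _ = _ := by ring

lemma abs_prod_sub_prod_le_fin {n : ℕ} {a b : Fin (n + 2) → ℝ} (ha : ∀ q, |a q| ≤ 1)
    (hb : ∀ q, |b q| ≤ 1) :
    |∏ q, a q - ∏ q, b q| ≤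
      |a 0 - b 0| * |a 1| + |b 0| * ∑ q : Fin (n + 1), |a q.succ - b q.succ| := by
  have htail : |∏ q : Fin (n + 1), a q.succ| ≤ |a 1| := by
    rw [Fin.prod_univ_succ, abs_mul, Fin.succ_zero_eq_one]
    refine mul_le_of_le_one_right (abs_nonneg _) ?_
    rw [abs_prod]; exact prod_le_one (fun _ _ => abs_nonneg _) fun q _ => ha _
  have hdiff := abs_prod_sub_prod_le univ (a := fun q : Fin (n + 1) => a q.succ)
    (b := fun q => b q.succ) (fun q _ => ha _) (fun q _ => hb _)
  rw [Fin.prod_univ_succ, Fin.prod_univ_succ (f := b)]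
  calc |a 0 * ∏ q : Fin (n + 1), a q.succ - b 0 * ∏ q : Fin (n + 1), b q.succ|
      = |(a 0 - b 0) * ∏ q : Fin (n + 1), a q.succ
          + b 0 * (∏ q : Fin (n + 1), a q.succ - ∏ q : Fin (n + 1), b q.succ)| := by ring_nf
    _ ≤ |a 0 - b 0| * |∏ q : Fin (n + 1), a q.succ|
          + |b 0| * |∏ q : Fin (n + 1), a q.succ - ∏ q : Fin (n + 1), b q.succ| := by
      rw [← abs_mul, ← abs_mul]; exact abs_add_le _ _
    _ ≤ _ := by gcongr

lemma sum_abs_mul_abs_le {ι : Type*} (s : Finset ι) {u v : ι → ℝ} {U V : ℝ} (hU : 0 ≤ U)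
    (hV : 0 ≤ V) (hu : ∑ i ∈ s, u i ^ 2 ≤ U ^ 2) (hv : ∑ i ∈ s, v i ^ 2 ≤ V ^ 2) :
    ∑ i ∈ s, |u i| * |v i| ≤ U * V := by
  calc ∑ i ∈ s, |u i| * |v i| ≤ √(∑ i ∈ s, |u i| ^ 2) * √(∑ i ∈ s, |v i| ^ 2) :=
        Real.sum_mul_le_sqrt_mul_sqrt s _ _
    _ ≤ √(U ^ 2) * √(V ^ 2) := by simp only [sq_abs]; gcongr
    _ = U * V := by rw [Real.sqrt_sq hU, Real.sqrt_sq hV]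

lemma abs_sum_mul_prod_sub_prod_le {n r : ℕ} {δ W : ℝ} (hδ : 0 ≤ δ) (hW : 0 ≤ W)
    {η : Fin r → ℝ} (hη : ∀ k, |η k| ≤ W) {a b : Fin (n + 2) → Fin r → ℝ}
    (ha : ∀ q k, |a q k| ≤ 1) (hb : ∀ q k, |b q k| ≤ 1)
    (ha₁ : ∑ k, a 1 k ^ 2 ≤ (1 + δ) ^ 2) (hb₀ : ∑ k, b 0 k ^ 2 ≤ 1 ^ 2)
    (hab : ∀ q, ∑ k, (a q k - b q k) ^ 2 ≤ δ ^ 2) :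
    |∑ k, η k * (∏ q, a q k - ∏ q, b q k)| ≤ W * δ * (n + 2 + δ) := by
  have hhead : ∑ k, |a 0 k - b 0 k| * |a 1 k| ≤ δ * (1 + δ) :=
    sum_abs_mul_abs_le _ hδ (by linarith) (hab 0) ha₁
  have htail (q : Fin (n + 1)) : ∑ k, |b 0 k| * |a q.succ k - b q.succ k| ≤ 1 * δ :=
    sum_abs_mul_abs_le _ zero_le_one hδ hb₀ (hab q.succ)
  calc |∑ k, η k * (∏ q, a q k - ∏ q, b q k)|
      ≤ ∑ k, |η k| * |∏ q, a q k - ∏ q, b q k| := by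
        simp only [← abs_mul]; exact abs_sum_le_sum_abs _ _
    _ ≤ ∑ k, W * (|a 0 k - b 0 k| * |a 1 k|
          + |b 0 k| * ∑ q : Fin (n + 1), |a q.succ k - b q.succ k|) := by
        gcongr with k
        · exact hη k
        · exact abs_prod_sub_prod_le_fin (fun q => ha q k) (fun q => hb q k)
    _ = W * (∑ k, |a 0 k - b 0 k| * |a 1 k|
          + ∑ q : Fin (n + 1), ∑ k, |b 0 k| * |a q.succ k - b q.succ k|) := by
        rw [← mul_sum, sum_add_distrib, sum_comm (s := univ) (t := univ)]
        simp only [mul_sum]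
    _ ≤ W * (δ * (1 + δ) + ∑ q : Fin (n + 1), 1 * δ) := by
        gcongr with q
        exact htail q
    _ = W * δ * (n + 2 + δ) := by
        simp only [sum_const, card_univ, Fintype.card_fin, nsmul_eq_mul]; push_cast; ring

namespace Matrix

section

variable {m n : Type*} [Fintype m]

lemma sum_sq_col_eq_one_of_transpose_mul_self_eq_one [DecidableEq n] {M : Matrix m n ℝ}
    (h : Mᵀ * M = 1) (k : n) : ∑ i, M i k ^ 2 = 1 := by
  simpa [mul_apply, sq] using congrFun₂ h k k

lemma abs_transpose_mulVec_le_one {M : Matrix m n ℝ} {x : m → ℝ} {k : n}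
    (hcol : ∑ i, M i k ^ 2 = 1) (hx : ∑ i, x i ^ 2 = 1) : |(Mᵀ *ᵥ x) k| ≤ 1 := by
  rw [← sq_le_one_iff_abs_le_one]
  calc (Mᵀ *ᵥ x) k ^ 2 = (∑ i, M i k * x i) ^ 2 := rfl
    _ ≤ (∑ i, M i k ^ 2) * ∑ i, x i ^ 2 := sum_mul_sq_le_sq_mul_sq _ _ _
    _ = 1 := by rw [hcol, hx, one_mul]

variable [Fintype n]

lemma sum_sq_mulVec_eq_dotProduct (M : Matrix m n ℝ) (x : n → ℝ) :
    ∑ i, (M *ᵥ x) i ^ 2 = x ⬝ᵥ (Mᵀ * M) *ᵥ x := by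
  rw [← mulVec_mulVec, dotProduct_mulVec, vecMul_transpose]
  simp only [dotProduct, sq]

lemma sum_sq_mulVec_eq_of_transpose_mul_self_eq {l : Type*} [Fintype l] {M : Matrix m n ℝ}
    {N : Matrix l n ℝ} (h : Mᵀ * M = Nᵀ * N) (x : n → ℝ) :
    ∑ i, (M *ᵥ x) i ^ 2 = ∑ i, (N *ᵥ x) i ^ 2 := by
  rw [sum_sq_mulVec_eq_dotProduct, sum_sq_mulVec_eq_dotProduct, h]

variable [DecidableEq n]

lemma sum_sq_mulVec_le_of_l2_opNorm_le {M : Matrix m n ℝ} {c : ℝ} (hM : ‖M‖ ≤ c) {x : n → ℝ}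
    (hx : ∑ j, x j ^ 2 = 1) : ∑ i, (M *ᵥ x) i ^ 2 ≤ c ^ 2 := by
  have h := M.l2_opNorm_mulVec (WithLp.toLp 2 x)
  rw [← sq_le_sq₀ (norm_nonneg _) (by positivity), EuclideanSpace.real_norm_sq_eq,
    mul_pow, EuclideanSpace.real_norm_sq_eq] at h
  simp only [EuclideanSpace.equiv, hx, mul_one] at h
  exact h.trans (pow_le_pow_left₀ (norm_nonneg M) hM 2)

lemma l2_opNorm_le_of_sum_sq_mulVec_le (M : Matrix m n ℝ) {c : ℝ} (hc : 0 ≤ c)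
    (h : ∀ x : n → ℝ, ∑ j, x j ^ 2 = 1 → ∑ i, (M *ᵥ x) i ^ 2 ≤ c ^ 2) : ‖M‖ ≤ c := by
  refine ContinuousLinearMap.opNorm_le_of_unit_norm hc fun x hx => ?_
  rw [← sq_le_sq₀ (norm_nonneg _) hc, EuclideanSpace.real_norm_sq_eq]
  refine h x.ofLp ?_
  rw [← EuclideanSpace.real_norm_sq_eq, hx, one_pow]

lemma l2_opNorm_transpose [DecidableEq m] (M : Matrix m n ℝ) : ‖Mᵀ‖ = ‖M‖ := by
  rw [← conjTranspose_eq_transpose_of_trivial, l2_opNorm_conjTranspose]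

lemma l2_opNorm_le_one_of_transpose_mul_self_eq_one {M : Matrix m n ℝ} (h : Mᵀ * M = 1) :
    ‖M‖ ≤ 1 :=
  M.l2_opNorm_le_of_sum_sq_mulVec_le zero_le_one fun x hx => by
    rw [sum_sq_mulVec_eq_of_transpose_mul_self_eq (N := (1 : Matrix n n ℝ)) (by simp [h]),
      one_mulVec, hx, one_pow]

end

lemma IsHermitian.l2_opNorm_sub_one_le {n : Type*} [Fintype n] [DecidableEq n]
    {M : Matrix n n ℝ} (hM : M.IsHermitian) {δ : ℝ} (hδ : 0 ≤ δ)
    (h : ∀ i, |hM.eigenvalues i - 1| ≤ δ) : ‖M - 1‖ ≤ δ := by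
  set V := hM.eigenvectorUnitary
  have hdiag :
      M - 1 = (V : Matrix n n ℝ) * diagonal (hM.eigenvalues - 1) * star (V : Matrix n n ℝ) := by
    conv_lhs => rw [hM.spectral_theorem, ← map_one (Unitary.conjStarAlgAut ℝ _ V), ← map_sub]
    rw [Unitary.conjStarAlgAut_apply, ← diagonal_one, diagonal_sub]
    rfl
  rw [hdiag, CStarRing.norm_mul_mem_unitary _ (Unitary.star_mem V.2),
    CStarRing.norm_mem_unitary_mul _ V.2, l2_opNorm_diagonal]
  exact (pi_norm_le_iff_of_nonneg hδ).2 fun i => by simpa [Real.norm_eq_abs] using h i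

/-- All singular values of `A` lie in `[1 - δ, 1 + δ]`. -/
def IsNearIsometry {m n : Type*} [Fintype m] [Fintype n] (A : Matrix m n ℝ) (δ : ℝ) : Prop :=
  ∀ x : n → ℝ, ∑ j, x j ^ 2 = 1 →
    (1 - δ) ^ 2 ≤ ∑ i, (A *ᵥ x) i ^ 2 ∧ ∑ i, (A *ᵥ x) i ^ 2 ≤ (1 + δ) ^ 2

section PolarFactor

variable {m n : Type*} [Fintype n] [DecidableEq n] {δ : ℝ} {A : Matrix m n ℝ} {P : Matrix n n ℝ}

lemma transpose_sub_transpose_mul_inv (hPs : Pᵀ = P) (hdet : IsUnit P.det) :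
    Aᵀ - (A * P⁻¹)ᵀ = (P - 1) * (A * P⁻¹)ᵀ := by
  rw [Matrix.sub_mul, Matrix.one_mul, transpose_mul, transpose_nonsing_inv, hPs,
    ← Matrix.mul_assoc, mul_nonsing_inv _ hdet, Matrix.one_mul]

variable [Fintype m]

lemma abs_eigenvalues_sub_one_le_of_mul_self_eq (hδ : 0 ≤ δ) (hsv : A.IsNearIsometry δ)
    (hP : P.PosSemidef) (hPP : P * P = Aᵀ * A) (i : n) :
    |hP.isHermitian.eigenvalues i - 1| ≤ δ := by
  set b := ⇑(hP.isHermitian.eigenvectorBasis i)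
  set μ := hP.isHermitian.eigenvalues i
  have hb : ∑ j, b j ^ 2 = 1 := by
    rw [← EuclideanSpace.real_norm_sq_eq, (hP.isHermitian.eigenvectorBasis).orthonormal.1 i,
      one_pow]
  have hAb : ∑ j, (A *ᵥ b) j ^ 2 = μ ^ 2 := by
    have hAP : Aᵀ * A = Pᵀ * P := by rw [← hPP, (isHermitian_iff_isSymm.1 hP.isHermitian).eq]
    rw [sum_sq_mulVec_eq_of_transpose_mul_self_eq hAP, hP.isHermitian.mulVec_eigenvectorBasis]
    simp only [Pi.smul_apply, smul_eq_mul, mul_pow, ← mul_sum]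
    exact (congrArg _ hb).trans (mul_one _)
  have hμ : 0 ≤ μ := hP.eigenvalues_nonneg i
  obtain ⟨hlo, hhi⟩ := hsv b hb
  rw [hAb] at hlo hhi
  rw [abs_sub_le_iff]
  constructor <;> nlinarith

lemma isUnit_det_of_mul_self_eq (hδ₀ : 0 ≤ δ) (hδ₁ : δ < 1) (hsv : A.IsNearIsometry δ)
    (hP : P.PosSemidef) (hPP : P * P = Aᵀ * A) : IsUnit P.det := by
  refine (isUnit_iff_isUnit_det P).1 (PosDef.isUnit ?_)
  refine hP.isHermitian.posDef_iff_eigenvalues_pos.2 fun i => ?_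
  linarith [(abs_le.1 (abs_eigenvalues_sub_one_le_of_mul_self_eq hδ₀ hsv hP hPP i)).1]

lemma transpose_mul_self_mul_inv_eq_one (hδ₀ : 0 ≤ δ) (hδ₁ : δ < 1) (hsv : A.IsNearIsometry δ)
    (hP : P.PosSemidef) (hPP : P * P = Aᵀ * A) : (A * P⁻¹)ᵀ * (A * P⁻¹) = 1 := by
  have hdet := isUnit_det_of_mul_self_eq hδ₀ hδ₁ hsv hP hPP
  rw [transpose_mul, transpose_nonsing_inv, (isHermitian_iff_isSymm.1 hP.isHermitian).eq,
    Matrix.mul_assoc, ← Matrix.mul_assoc Aᵀ, ← hPP, Matrix.mul_assoc, mul_nonsing_inv _ hdet,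
    Matrix.mul_one, nonsing_inv_mul _ hdet]

lemma l2_opNorm_transpose_sub_transpose_mul_inv_le [DecidableEq m] (hδ₀ : 0 ≤ δ) (hδ₁ : δ < 1)
    (hsv : A.IsNearIsometry δ) (hP : P.PosSemidef) (hPP : P * P = Aᵀ * A) :
    ‖Aᵀ - (A * P⁻¹)ᵀ‖ ≤ δ := by
  rw [transpose_sub_transpose_mul_inv (isHermitian_iff_isSymm.1 hP.isHermitian).eq
    (isUnit_det_of_mul_self_eq hδ₀ hδ₁ hsv hP hPP)]
  calc ‖(P - 1) * (A * P⁻¹)ᵀ‖ ≤ ‖P - 1‖ * ‖(A * P⁻¹)ᵀ‖ := l2_opNorm_mul _ _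
    _ ≤ δ * 1 := by
      gcongr
      · exact hP.isHermitian.l2_opNorm_sub_one_le hδ₀
          (abs_eigenvalues_sub_one_le_of_mul_self_eq hδ₀ hsv hP hPP)
      · rw [l2_opNorm_transpose]
        exact l2_opNorm_le_one_of_transpose_mul_self_eq_one
          (transpose_mul_self_mul_inv_eq_one hδ₀ hδ₁ hsv hP hPP)
    _ = δ := mul_one δ

end PolarFactor

end Matrix

lemma tInner_sub {p d : ℕ} (X T : (Fin p → Fin d) → ℝ) (x : Fin p → Fin d → ℝ) :
    tInner (fun i => X i - T i) x = tInner X x - tInner T x := by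
  simp only [tInner, sub_mul, sum_sub_distrib]

lemma tInner_sum_rankOne {p d r : ℕ} (η : Fin r → ℝ) (M : Fin p → Matrix (Fin d) (Fin r) ℝ)
    (x : Fin p → Fin d → ℝ) :
    tInner (fun i => ∑ k, η k * ∏ q, M q (i q) k) x = ∑ k, η k * ∏ q, ((M q)ᵀ *ᵥ x q) k := by
  simp only [tInner, sum_mul, mul_assoc, ← prod_mul_distrib]
  rw [sum_comm]
  refine sum_congr rfl fun k _ => ?_
  rw [← mul_sum]
  congr 1
  exact (Fintype.prod_sum fun q j => M q j k * x q j).symm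

/-- Let `X = ∑_k η_k a_k^{(1)} ⊗ ⋯ ⊗ a_k^{(p)}` with `η₁ ≥ ⋯ ≥ η_r > 0`, unit columns
`a_k^{(q)}` of `A^{(q)}`, and all singular values of each `A^{(q)}` in `[1-δ, 1+δ]`
(`0 ≤ δ < 1`). If `U^{(q)}` is the polar factor of `A^{(q)}` and
`T = ∑_k η_k u_k^{(1)} ⊗ ⋯ ⊗ u_k^{(p)}`, then `‖X - T‖ ≤ (p+1) δ η₁`. -/
theorem stmt8 (p d r : ℕ) (hp : 3 ≤ p) (hr : 0 < r)
    (δ : ℝ) (hδ0 : 0 ≤ δ) (hδ1 : δ < 1)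
    (η : Fin r → ℝ) (hpos : ∀ k, 0 < η k) (hmono : ∀ k l : Fin r, k ≤ l → η l ≤ η k)
    (A : Fin p → Matrix (Fin d) (Fin r) ℝ)
    (hcol : ∀ q k, ∑ i, (A q i k) ^ 2 = 1)
    (hsv : ∀ q (x : Fin r → ℝ), (∑ j, x j ^ 2 = 1) →
      ((1 - δ) ^ 2 ≤ ∑ i, ((A q).mulVec x i) ^ 2) ∧
      (∑ i, ((A q).mulVec x i) ^ 2 ≤ (1 + δ) ^ 2))
    (P : Fin p → Matrix (Fin r) (Fin r) ℝ)
    (hP : ∀ q, (P q).PosSemidef) (hPP : ∀ q, P q * P q = (A q)ᵀ * A q)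
    (U : Fin p → Matrix (Fin d) (Fin r) ℝ) (hU : ∀ q, U q = A q * (P q)⁻¹)
    (X T : (Fin p → Fin d) → ℝ)
    (hX : ∀ i, X i = ∑ k, η k * ∏ q, A q (i q) k)
    (hT : ∀ i, T i = ∑ k, η k * ∏ q, U q (i q) k) :
    specNorm (fun i => X i - T i) ≤ (p + 1) * δ * η ⟨0, hr⟩ := by
  obtain ⟨n, rfl⟩ : ∃ n, p = n + 2 := ⟨p - 2, by omega⟩
  obtain rfl : X = _ := funext hX
  obtain rfl : T = _ := funext hT
  have hη (k : Fin r) : |η k| ≤ η ⟨0, hr⟩ :=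
    (abs_of_pos (hpos k)).trans_le (hmono _ k (Nat.zero_le _))
  have hUU (q : Fin (n + 2)) : (U q)ᵀ * U q = 1 :=
    hU q ▸ transpose_mul_self_mul_inv_eq_one hδ0 hδ1 (hsv q) (hP q) (hPP q)
  have hAU (q : Fin (n + 2)) : ‖(A q)ᵀ - (U q)ᵀ‖ ≤ δ :=
    hU q ▸ l2_opNorm_transpose_sub_transpose_mul_inv_le hδ0 hδ1 (hsv q) (hP q) (hPP q)
  have hA (q : Fin (n + 2)) : ‖(A q)ᵀ‖ ≤ 1 + δ := (l2_opNorm_transpose _).trans_le <|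
    (A q).l2_opNorm_le_of_sum_sq_mulVec_le (by linarith) fun y hy => (hsv q y hy).2
  have hUt (q : Fin (n + 2)) : ‖(U q)ᵀ‖ ≤ 1 :=
    (l2_opNorm_transpose _).trans_le (l2_opNorm_le_one_of_transpose_mul_self_eq_one (hUU q))
  refine Real.sSup_le ?_ (mul_nonneg (mul_nonneg (by positivity) hδ0) (hpos _).le)
  rintro _ ⟨x, hx, rfl⟩
  rw [tInner_sub, tInner_sum_rankOne, tInner_sum_rankOne, ← sum_sub_distrib]
  simp only [← mul_sub]
  calc _ ≤ |∑ k, η k * (∏ q, ((A q)ᵀ *ᵥ x q) k - ∏ q, ((U q)ᵀ *ᵥ x q) k)| := le_abs_self _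
    _ ≤ η ⟨0, hr⟩ * δ * (n + 2 + δ) :=
      abs_sum_mul_prod_sub_prod_le hδ0 (hpos _).le hη
        (fun q k => abs_transpose_mulVec_le_one (hcol q k) (hx q))
        (fun q k => abs_transpose_mulVec_le_one
          (sum_sq_col_eq_one_of_transpose_mul_self_eq_one (hUU q) k) (hx q))
        (sum_sq_mulVec_le_of_l2_opNorm_le (hA 1) (hx 1))
        (sum_sq_mulVec_le_of_l2_opNorm_le (hUt 0) (hx 0))
        (fun q => by
          simpa only [sub_mulVec, Pi.sub_apply] using
            sum_sq_mulVec_le_of_l2_opNorm_le (hAU q) (hx q))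
    _ ≤ _ := by
      push_cast
      nlinarith [mul_nonneg (mul_nonneg (hpos ⟨0, hr⟩).le hδ0) (sub_nonneg.2 hδ1.le)]
end

section
/- Let $\mathscr{T}=\sum_{k=1}^{d}\lambda_k u_k^{(1)}\otimes\cdots\otimes u_k^{(p)}$ be an odeco tensor with $p\ge 3$, $\lambda_k>0$. Suppose $(\lambda, v^{(1)},\ldots,v^{(p)})$ is a singular value/vector tuple of $\mathscr{T}$ with $\lambda>0$ and such that $\prod_{q=1}^p\langle v^{(q)},u_k^{(q)}\rangle\ne 0$ for all $k$ in a nonempty set $S\subseteq[d]$ and $\langle v^{(q)},u_k^{(q)}\rangle=0$ for $k\notin S$. Then $\lambda=\big(\sum_{k\in S}\lambda_k^{-2/(p-2)}\big)^{-(p-2)/2}$ and $|\langle v^{(q)},u_k^{(q)}\rangle|=(\lambda/\lambda_k)^{1/(p-2)}$ for all $k\in S$ and all $q$. In particular $\lambda<\min_{k\in S}\lambda_k$ when $|S|\ge 2$. -/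
/-!
Write `c_k^(q) = ⟨v^(q), u_k^(q)⟩`. Since the `u_k^(q)` are orthonormal in mode `q`, the singular
equation in mode `q` read in that basis is the scalar system `λ_k ∏_{j ≠ q} c_k^(j) = λ c_k^(q)`.
For `k ∈ S` it forces `|c_k^(q)| = (λ/λ_k)^{1/(p-2)}` for every `q`, and Parseval for the unit
vector `v^(q)` then gives `∑_{k ∈ S} (λ/λ_k)^{2/(p-2)} = 1`, which determines `λ` and, once `S`
has two elements, makes each term, hence each `λ/λ_k`, smaller than `1`.
-/

open Finset Real

/-- Contraction of a `p`-th order tensor against the vectors `v j` in every mode `j ≠ q`,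
leaving a vector in mode `q`. -/
noncomputable def contractExcept {p d : ℕ} (T : (Fin p → Fin d) → ℝ)
    (v : Fin p → Fin d → ℝ) (q : Fin p) (m : Fin d) : ℝ :=
  ∑ i : Fin p → Fin d,
    if i q = m then T i * ∏ j ∈ Finset.univ.erase q, v j (i j) else 0

/-- `∑ k, lams k • u 0 k ⊗ ⋯ ⊗ u (p - 1) k`: the vector `u q k` is the paper's `u_k^(q+1)`. -/
noncomputable def rankOneSum {p d : ℕ} (lams : Fin d → ℝ) (u : Fin p → Fin d → Fin d → ℝ)
    (i : Fin p → Fin d) : ℝ :=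
  ∑ k, lams k * ∏ q, u q k (i q)

section Contraction

variable {p d : ℕ}

lemma contractExcept_eq_sum_mul_prod_update (T : (Fin p → Fin d) → ℝ) (v : Fin p → Fin d → ℝ)
    (q : Fin p) (m : Fin d) :
    contractExcept T v q m = ∑ i, T i * ∏ j, Function.update v q (Pi.single m 1) j (i j) := by
  refine sum_congr rfl fun i _ => ?_
  have hrest : ∏ j ∈ univ.erase q, Function.update v q (Pi.single m 1) j (i j)
      = ∏ j ∈ univ.erase q, v j (i j) :=
    prod_congr rfl fun j hj => by rw [Function.update_of_ne (ne_of_mem_erase hj)]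
  rw [← mul_prod_erase univ _ (mem_univ q), Function.update_self, Pi.single_apply, hrest]
  split_ifs <;> simp

lemma sum_rankOneSum_mul_prod (lams : Fin d → ℝ) (u : Fin p → Fin d → Fin d → ℝ)
    (w : Fin p → Fin d → ℝ) :
    ∑ i, rankOneSum lams u i * ∏ j, w j (i j) = ∑ k, lams k * ∏ j, ∑ n, w j n * u j k n := by
  simp only [rankOneSum, sum_mul, mul_assoc, ← prod_mul_distrib]
  rw [sum_comm]
  refine sum_congr rfl fun k _ => ?_
  rw [← mul_sum, Fintype.prod_sum]
  simp only [mul_comm]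

lemma contractExcept_rankOneSum (lams : Fin d → ℝ) (u : Fin p → Fin d → Fin d → ℝ)
    (v : Fin p → Fin d → ℝ) (q : Fin p) (m : Fin d) :
    contractExcept (rankOneSum lams u) v q m
      = ∑ k, lams k * (∏ j ∈ univ.erase q, ∑ n, v j n * u j k n) * u q k m := by
  rw [contractExcept_eq_sum_mul_prod_update, sum_rankOneSum_mul_prod]
  refine sum_congr rfl fun k _ => ?_
  have hrest : ∏ j ∈ univ.erase q, ∑ n, Function.update v q (Pi.single m 1) j n * u j k n
      = ∏ j ∈ univ.erase q, ∑ n, v j n * u j k n :=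
    prod_congr rfl fun j hj => by rw [Function.update_of_ne (ne_of_mem_erase hj)]
  rw [← mul_prod_erase univ _ (mem_univ q), Function.update_self, hrest]
  simp only [Pi.single_apply, ite_mul, one_mul, zero_mul, sum_ite_eq', mem_univ, if_true]
  ring

lemma sum_contractExcept_rankOneSum_mul {lams : Fin d → ℝ} {u : Fin p → Fin d → Fin d → ℝ}
    {q : Fin p} (hu : ∀ k l, ∑ n, u q k n * u q l n = if k = l then 1 else 0)
    (v : Fin p → Fin d → ℝ) (l : Fin d) :
    ∑ m, contractExcept (rankOneSum lams u) v q m * u q l m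
      = lams l * ∏ j ∈ univ.erase q, ∑ n, v j n * u j l n := by
  simp only [contractExcept_rankOneSum, sum_mul, mul_assoc]
  rw [sum_comm]
  simp [← mul_sum, hu]

lemma rankOneSum_singular_coord {lams : Fin d → ℝ} {u : Fin p → Fin d → Fin d → ℝ}
    {v : Fin p → Fin d → ℝ} {lam : ℝ}
    (hsing : ∀ q m, contractExcept (rankOneSum lams u) v q m = lam * v q m) {q : Fin p}
    (hu : ∀ k l, ∑ n, u q k n * u q l n = if k = l then 1 else 0) (l : Fin d) :
    lams l * ∏ j ∈ univ.erase q, ∑ n, v j n * u j l n = lam * ∑ n, v q n * u q l n := by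
  rw [← sum_contractExcept_rankOneSum_mul hu]
  simp only [hsing, mul_assoc, ← mul_sum]

end Contraction

/-- Multiplying the `j`-th equation by `c j` shows that `c j ^ 2` does not depend on `j`; then
`∏ c > 0` is forced, and `μ s ^ p = lam s ^ 2` for `s = |c q|`. -/
theorem abs_eq_rpow_of_mul_prod_erase_eq {p : ℕ} (hp : 3 ≤ p) {c : Fin p → ℝ} {μ lam : ℝ}
    (hμ : 0 < μ) (hlam : 0 < lam) (h : ∀ j, μ * ∏ i ∈ univ.erase j, c i = lam * c j)
    {q : Fin p} (hq : c q ≠ 0) :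
    |c q| = (lam / μ) ^ (1 / ((p : ℝ) - 2)) := by
  have hprod : ∀ j, μ * ∏ i, c i = lam * c j ^ 2 := fun j => by
    rw [← mul_prod_erase univ _ (mem_univ j)]
    linear_combination c j * h j
  have habs : ∀ j, |c j| = |c q| := fun j =>
    sq_eq_sq_iff_abs_eq_abs _ _ |>.mp <| mul_left_cancel₀ hlam.ne' <|
      (hprod j).symm.trans (hprod q)
  set s := |c q|
  have hs : 0 < s := abs_pos.mpr hq
  have hprod_pos : 0 < ∏ i, c i :=
    pos_of_mul_pos_right (by rw [hprod q]; positivity) hμ.le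
  have hprod_eq : ∏ i, c i = s ^ p := by
    rw [← abs_of_pos hprod_pos, abs_prod, prod_congr rfl fun j _ => habs j, prod_const,
      card_univ, Fintype.card_fin]
  have hpow : s ^ (p - 2) = lam / μ := by
    have := hprod q
    rw [hprod_eq, ← sq_abs, ← Nat.sub_add_cancel (by omega : 2 ≤ p), pow_add, ← mul_assoc] at this
    rw [eq_div_iff hμ.ne', mul_comm]
    exact mul_right_cancel₀ (pow_ne_zero 2 hs.ne') this
  have hcast : (p : ℝ) - 2 = ((p - 2 : ℕ) : ℝ) := by
    push_cast [Nat.cast_sub (by omega : 2 ≤ p)]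
    ring
  rw [← hpow, hcast, one_div, pow_rpow_inv_natCast hs.le (by omega)]

open Matrix in
theorem sum_sq_sum_mul_eq_sum_sq {n : Type*} [Fintype n] [DecidableEq n] {u : n → n → ℝ}
    (hu : ∀ k l, ∑ j, u k j * u l j = if k = l then 1 else 0) (v : n → ℝ) :
    ∑ k, (∑ m, v m * u k m) ^ 2 = ∑ m, v m ^ 2 := by
  let U : Matrix n n ℝ := of u
  have hU : U * Uᵀ = 1 := by
    ext k l
    simpa [U, mul_apply, one_apply] using hu k l
  have h : (v ᵥ* Uᵀ) ⬝ᵥ (v ᵥ* Uᵀ) = v ⬝ᵥ v := by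
    rw [vecMul_transpose, dotProduct_mulVec, ← vecMul_transpose, vecMul_vecMul,
      mul_eq_one_comm.mp hU, vecMul_one]
  simpa [dotProduct, vecMul, U, sq] using h

section PowerSum

variable {ι : Type*} {S : Finset ι} {a : ι → ℝ} {lam e : ℝ}

theorem eq_rpow_of_sum_div_rpow_eq_one (ha : ∀ k ∈ S, 0 < a k) (hlam : 0 < lam) (he : e ≠ 0)
    (h : ∑ k ∈ S, (lam / a k) ^ e = 1) :
    lam = (∑ k ∈ S, a k ^ (-e)) ^ (-e⁻¹) := by
  have hsum : ∑ k ∈ S, a k ^ (-e) = lam ^ (-e) := by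
    have hterm : ∀ k ∈ S, (lam / a k) ^ e = lam ^ e * a k ^ (-e) := fun k hk => by
      rw [div_rpow hlam.le (ha k hk).le, rpow_neg (ha k hk).le, div_eq_mul_inv]
    rw [sum_congr rfl hterm, ← mul_sum] at h
    rw [rpow_neg hlam.le, eq_inv_of_mul_eq_one_right h]
  rw [hsum, ← rpow_mul hlam.le, neg_mul_neg, mul_inv_cancel₀ he, rpow_one]

theorem lt_of_sum_div_rpow_eq_one (hS : 2 ≤ #S) (ha : ∀ k ∈ S, 0 < a k) (hlam : 0 < lam)
    (he : 0 < e) (h : ∑ k ∈ S, (lam / a k) ^ e = 1) {k : ι} (hk : k ∈ S) :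
    lam < a k := by
  obtain ⟨k', hk', hk'k⟩ := S.exists_mem_ne (by omega) k
  have hlt : (lam / a k) ^ e < 1 :=
    h ▸ single_lt_sum (f := fun j => (lam / a j) ^ e) hk'k hk hk'
      (by have := ha k' hk'; positivity) fun j hj _ => by have := ha j hj; positivity
  have hbase : lam / a k < 1 :=
    (((rpow_lt_one_iff_of_pos (div_pos hlam (ha k hk))).mp hlt).resolve_left
      fun hneg => hneg.2.not_gt he).1
  exact (div_lt_one (ha k hk)).mp hbase

end PowerSum

theorem stmt9_general (p d : ℕ) (hp : 3 ≤ p)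
    (lams : Fin d → ℝ) (hlams : ∀ k, 0 < lams k)
    (u : Fin p → Fin d → Fin d → ℝ)
    (hu : ∀ q k l, (∑ j, u q k j * u q l j) = if k = l then 1 else 0)
    (T : (Fin p → Fin d) → ℝ)
    (hT : ∀ i, T i = ∑ k, lams k * ∏ q, u q k (i q))
    (lam : ℝ) (hlam : 0 < lam)
    (v : Fin p → Fin d → ℝ) (hvunit : ∀ q, ∑ m, v q m ^ 2 = 1)
    (hsing : ∀ q m, contractExcept T v q m = lam * v q m)
    (S : Finset (Fin d))
    (hin : ∀ k ∈ S, ∀ q, (∑ m, v q m * u q k m) ≠ 0)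
    (hout : ∀ k ∉ S, ∀ q : Fin p, (∑ m, v q m * u q k m) = 0) :
    lam = (∑ k ∈ S, lams k ^ (-(2 : ℝ) / ((p : ℝ) - 2))) ^ (-(((p : ℝ) - 2) / 2)) ∧
    (∀ k ∈ S, ∀ q, |∑ m, v q m * u q k m| = (lam / lams k) ^ ((1 : ℝ) / ((p : ℝ) - 2))) ∧
    (2 ≤ S.card → ∀ k ∈ S, lam < lams k) := by
  obtain rfl : T = rankOneSum lams u := funext hT
  have habs : ∀ k ∈ S, ∀ q, |∑ m, v q m * u q k m| = (lam / lams k) ^ (1 / ((p : ℝ) - 2)) :=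
    fun k hk q => abs_eq_rpow_of_mul_prod_erase_eq hp (hlams k) hlam
      (fun j => rankOneSum_singular_coord hsing (hu j) k) (hin k hk q)
  have hp2 : (0 : ℝ) < (p : ℝ) - 2 := by
    have : (3 : ℝ) ≤ p := by exact_mod_cast hp
    linarith
  have hsum : ∑ k ∈ S, (lam / lams k) ^ (2 / ((p : ℝ) - 2)) = 1 := by
    let q₀ : Fin p := ⟨0, by omega⟩
    rw [← hvunit q₀, ← sum_sq_sum_mul_eq_sum_sq (hu q₀),
      ← sum_subset (subset_univ S) fun k _ hk => by rw [hout k hk q₀, sq, mul_zero]]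
    refine sum_congr rfl fun k hk => ?_
    rw [← sq_abs, habs k hk q₀, ← rpow_mul_natCast (div_pos hlam (hlams k)).le]
    ring_nf
  refine ⟨?_, habs, fun hcard k hk =>
    lt_of_sum_div_rpow_eq_one hcard (fun k _ => hlams k) hlam (by positivity) hsum hk⟩
  rw [neg_div, show -(((p : ℝ) - 2) / 2) = -(2 / ((p : ℝ) - 2))⁻¹ by rw [inv_div],
    eq_rpow_of_sum_div_rpow_eq_one (fun k _ => hlams k) hlam (by positivity) hsum]

/-- For an odeco tensor `T = ∑_k λ_k u_k^{(1)} ⊗ ⋯ ⊗ u_k^{(p)}` (`p ≥ 3`, `λ_k > 0`) and a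
singular value/vector tuple `(λ, v^{(1)},…,v^{(p)})` with `λ > 0`, active set `S`:
`λ = (∑_{k∈S} λ_k^{-2/(p-2)})^{-(p-2)/2}`, `|⟨v^{(q)}, u_k^{(q)}⟩| = (λ/λ_k)^{1/(p-2)}` for all
`k ∈ S` and all `q`, and `λ < min_{k∈S} λ_k` when `|S| ≥ 2`. -/
theorem stmt9 (p d : ℕ) (hp : 3 ≤ p)
    (lams : Fin d → ℝ) (hlams : ∀ k, 0 < lams k)
    (u : Fin p → Fin d → Fin d → ℝ)
    (hu : ∀ q k l, (∑ j, u q k j * u q l j) = if k = l then 1 else 0)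
    (T : (Fin p → Fin d) → ℝ)
    (hT : ∀ i, T i = ∑ k, lams k * ∏ q, u q k (i q))
    (lam : ℝ) (hlam : 0 < lam)
    (v : Fin p → Fin d → ℝ) (hvunit : ∀ q, ∑ m, v q m ^ 2 = 1)
    (hsing : ∀ q m, contractExcept T v q m = lam * v q m)
    (S : Finset (Fin d)) (hS : S.Nonempty)
    (hin : ∀ k ∈ S, ∀ q, (∑ m, v q m * u q k m) ≠ 0)
    (hout : ∀ k ∉ S, ∀ q : Fin p, (∑ m, v q m * u q k m) = 0) :
    lam = (∑ k ∈ S, lams k ^ (-(2 : ℝ) / ((p : ℝ) - 2))) ^ (-(((p : ℝ) - 2) / 2)) ∧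
    (∀ k ∈ S, ∀ q, |∑ m, v q m * u q k m| = (lam / lams k) ^ ((1 : ℝ) / ((p : ℝ) - 2))) ∧
    (2 ≤ S.card → ∀ k ∈ S, lam < lams k) :=
  stmt9_general p d hp lams hlams u hu T hT lam hlam v hvunit hsing S hin hout
end

section
/- Let $\mathscr{T}=\sum_{k=1}^d\lambda_k u_k^{(1)}\otimes\cdots\otimes u_k^{(p)}$ be odeco ($p\ge 3$) and let $(a^{(1)},\ldots,a^{(p)})$ be a critical point of $F(a^{(1)},\ldots,a^{(p)})=\langle\mathscr{T},a^{(1)}\otimes\cdots\otimes a^{(p)}\rangle$ on the product of unit spheres with Lagrange multiplier $\lambda>0$, i.e., $\mathscr{T}\times_{q'\ne q}a^{(q')}=\lambda a^{(q)}$ for all $q$. If the set $S=\{k:\lambda_k\prod_q\langle u_k^{(q)},a^{(q)}\rangle\ne 0\}$ has at least two elements, then $(a^{(1)},\ldots,a^{(p)})$ is not a local maximum of $F$. -/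
/-!
In the odeco frame `F(b) = ∑_k λ_k ∏_q ⟨u_k^{(q)}, b^{(q)}⟩`, and criticality forces
`λ ⟨u_k^{(q)}, a^{(q)}⟩² = w_k := λ_k ∏_q ⟨u_k^{(q)}, a^{(q)}⟩` for every `q`. Multiplying the
component of every `a^{(q)}` along `u_k^{(q)}` by `σ_k ≥ 0` keeps all vectors on the sphere iff
`∑_k (σ_k² - 1) w_k = 0`, and changes `F` by `∑_k (σ_k^p - 1) w_k`. Bernoulli's inequality
`σ^p ≥ 1 + (p/2)(σ² - 1)`, strict for `σ² ≠ 1` and `p > 2`, makes this change positive as soon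
as some `σ_k ≠ 1` with `w_k > 0`; with two indices in `S` one moves a small mass `δ` of `w` from
one to the other.
-/

open Finset Real

open Matrix

section Rescale

variable {ι κ : Type*} [Fintype ι] [Fintype κ] [DecidableEq ι] {e : ι → κ → ℝ}

noncomputable def rescale (e : ι → κ → ℝ) (σ : ι → ℝ) (x : κ → ℝ) : κ → ℝ :=
  x + ∑ k, ((σ k - 1) * (e k ⬝ᵥ x)) • e k

lemma dotProduct_sum_smul_of_orthonormal (he : ∀ k l, e k ⬝ᵥ e l = if k = l then 1 else 0)
    (α : ι → ℝ) (l : ι) : e l ⬝ᵥ ∑ k, α k • e k = α l := by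
  simp [dotProduct_sum, dotProduct_smul, he]

lemma sum_smul_dotProduct_self_of_orthonormal
    (he : ∀ k l, e k ⬝ᵥ e l = if k = l then 1 else 0) (α : ι → ℝ) :
    (∑ k, α k • e k) ⬝ᵥ (∑ k, α k • e k) = ∑ k, α k ^ 2 := by
  simp [sum_dotProduct, smul_dotProduct, dotProduct_sum_smul_of_orthonormal he, sq]

lemma dotProduct_rescale (he : ∀ k l, e k ⬝ᵥ e l = if k = l then 1 else 0)
    (σ : ι → ℝ) (x : κ → ℝ) (l : ι) : e l ⬝ᵥ rescale e σ x = σ l * (e l ⬝ᵥ x) := by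
  rw [rescale, dotProduct_add, dotProduct_sum_smul_of_orthonormal he]
  ring

lemma rescale_sub_dotProduct_self (he : ∀ k l, e k ⬝ᵥ e l = if k = l then 1 else 0)
    (σ : ι → ℝ) (x : κ → ℝ) :
    (rescale e σ x - x) ⬝ᵥ (rescale e σ x - x) = ∑ k, (σ k - 1) ^ 2 * (e k ⬝ᵥ x) ^ 2 := by
  simp only [rescale, add_sub_cancel_left, sum_smul_dotProduct_self_of_orthonormal he, mul_pow]

lemma rescale_dotProduct_self (he : ∀ k l, e k ⬝ᵥ e l = if k = l then 1 else 0)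
    (σ : ι → ℝ) (x : κ → ℝ) :
    rescale e σ x ⬝ᵥ rescale e σ x = x ⬝ᵥ x + ∑ k, (σ k ^ 2 - 1) * (e k ⬝ᵥ x) ^ 2 := by
  have hcross : (∑ k, ((σ k - 1) * (e k ⬝ᵥ x)) • e k) ⬝ᵥ x
      = ∑ k, (σ k - 1) * (e k ⬝ᵥ x) ^ 2 := by
    simp only [sum_dotProduct, smul_dotProduct, smul_eq_mul, sq, mul_assoc]
  rw [rescale, add_dotProduct, dotProduct_add, dotProduct_add, dotProduct_comm x (∑ k, _),
    hcross, sum_smul_dotProduct_self_of_orthonormal he, add_assoc, add_right_inj, ← add_assoc,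
    ← Finset.sum_add_distrib, ← Finset.sum_add_distrib]
  exact Finset.sum_congr rfl fun k _ => by ring

end Rescale

lemma pow_eq_one_add_sq_sub_one_rpow {σ : ℝ} (hσ : 0 ≤ σ) (p : ℕ) :
    σ ^ p = (1 + (σ ^ 2 - 1)) ^ ((p : ℝ) / 2) := by
  rw [add_sub_cancel, ← Real.rpow_natCast_mul hσ, Nat.cast_ofNat, mul_div_cancel₀ _ two_ne_zero,
    Real.rpow_natCast]

lemma half_mul_sq_sub_one_le_pow_sub_one {σ : ℝ} (hσ : 0 ≤ σ) {p : ℕ} (hp : 2 ≤ p) :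
    (p / 2 : ℝ) * (σ ^ 2 - 1) ≤ σ ^ p - 1 := by
  have hp' : (1 : ℝ) ≤ p / 2 := by
    rw [le_div_iff₀ two_pos]; exact_mod_cast hp
  have := one_add_mul_self_le_rpow_one_add (by nlinarith : -1 ≤ σ ^ 2 - 1) hp'
  linarith [pow_eq_one_add_sq_sub_one_rpow hσ p]

lemma half_mul_sq_sub_one_lt_pow_sub_one {σ : ℝ} (hσ : 0 ≤ σ) (hσ1 : σ ^ 2 ≠ 1) {p : ℕ}
    (hp : 2 < p) : (p / 2 : ℝ) * (σ ^ 2 - 1) < σ ^ p - 1 := by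
  have hp' : (1 : ℝ) < p / 2 := by
    rw [lt_div_iff₀ two_pos]; exact_mod_cast hp
  have := one_add_mul_self_lt_rpow_one_add (by nlinarith : -1 ≤ σ ^ 2 - 1)
    (sub_ne_zero.mpr hσ1) hp'
  linarith [pow_eq_one_add_sq_sub_one_rpow hσ p]

theorem sum_pow_sub_one_mul_pos {ι : Type*} [Fintype ι] {w σ : ι → ℝ} (hw : ∀ i, 0 ≤ w i)
    (hσ : ∀ i, 0 ≤ σ i) (hbal : ∑ i, (σ i ^ 2 - 1) * w i = 0) {k : ι} (hk : 0 < w k)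
    (hσk : σ k ^ 2 ≠ 1) {p : ℕ} (hp : 2 < p) : 0 < ∑ i, (σ i ^ p - 1) * w i :=
  calc (0 : ℝ) = ∑ i, (p / 2 : ℝ) * (σ i ^ 2 - 1) * w i := by
        simp only [mul_assoc, ← Finset.mul_sum, hbal, mul_zero]
    _ < ∑ i, (σ i ^ p - 1) * w i :=
        Finset.sum_lt_sum
          (fun i _ => mul_le_mul_of_nonneg_right
            (half_mul_sq_sub_one_le_pow_sub_one (hσ i) hp.le) (hw i))
          ⟨k, Finset.mem_univ k, mul_lt_mul_of_pos_right
            (half_mul_sq_sub_one_lt_pow_sub_one (hσ k) hσk hp) hk⟩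

lemma sq_sub_one_mul_le_abs {σ w : ℝ} (hσ : 0 ≤ σ) (hw : 0 ≤ w) :
    (σ - 1) ^ 2 * w ≤ |(σ ^ 2 - 1) * w| := by
  rw [abs_mul, abs_of_nonneg hw]
  refine mul_le_mul_of_nonneg_right ?_ hw
  rcases le_total σ 1 with h | h
  · rw [abs_of_nonpos (by nlinarith)]; nlinarith
  · rw [abs_of_nonneg (by nlinarith)]; nlinarith

theorem exists_balanced_rescaling {ι : Type*} [Fintype ι] [DecidableEq ι] {w : ι → ℝ}
    {k l : ι} (hkl : k ≠ l) (hk : 0 < w k) (hl : 0 < w l) {η : ℝ} (hη : 0 < η) :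
    ∃ σ : ι → ℝ, (∀ i, 0 ≤ σ i) ∧ σ k ^ 2 ≠ 1 ∧ ∑ i, (σ i ^ 2 - 1) * w i = 0 ∧
      ∑ i, (σ i - 1) ^ 2 * w i < η := by
  set δ := min (w l) (η / 3)
  have hδpos : 0 < δ := lt_min hl (by positivity)
  have hδl : δ / w l ≤ 1 := (div_le_one hl).mpr (min_le_left _ _)
  set σ : ι → ℝ := fun i =>
    if i = k then √(1 + δ / w k) else if i = l then √(1 - δ / w l) else 1 with hσ
  have hσk : σ k ^ 2 = 1 + δ / w k := by
    simp only [hσ, if_pos rfl]; exact Real.sq_sqrt (by positivity)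
  have hσl : σ l ^ 2 = 1 - δ / w l := by
    simp only [hσ, if_neg hkl.symm]; exact Real.sq_sqrt (by linarith)
  have hσ1 : ∀ i, i ≠ k ∧ i ≠ l → σ i = 1 := fun i hi => by simp [hσ, hi.1, hi.2]
  have hσ0 : ∀ i, 0 ≤ σ i := fun i => by
    simp only [hσ]; split_ifs <;> positivity
  have hbal_k : (σ k ^ 2 - 1) * w k = δ := by rw [hσk]; field_simp; ring
  have hbal_l : (σ l ^ 2 - 1) * w l = -δ := by rw [hσl]; field_simp; ring
  refine ⟨σ, hσ0, by rw [hσk]; exact (lt_add_of_pos_right 1 (by positivity)).ne', ?_, ?_⟩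
  · rw [Fintype.sum_eq_add k l hkl (fun i hi => by simp [hσ1 i hi]), hbal_k, hbal_l]
    ring
  · rw [Fintype.sum_eq_add k l hkl (fun i hi => by simp [hσ1 i hi])]
    have hk' := sq_sub_one_mul_le_abs (hσ0 k) hk.le
    have hl' := sq_sub_one_mul_le_abs (hσ0 l) hl.le
    rw [hbal_k, abs_of_pos hδpos] at hk'
    rw [hbal_l, abs_neg, abs_of_pos hδpos] at hl'
    have : δ ≤ η / 3 := min_le_right _ _
    linarith

lemma dotProduct_contractExcept (T : (Fin p → Fin d) → ℝ) (v : Fin p → Fin d → ℝ) (q : Fin p)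
    (w : Fin d → ℝ) : w ⬝ᵥ contractExcept T v q = tInner T (Function.update v q w) := by
  unfold contractExcept tInner dotProduct
  simp only [Finset.mul_sum, mul_ite, mul_zero]
  rw [Finset.sum_comm]
  refine Finset.sum_congr rfl fun i _ => ?_
  have hoff : ∏ j ∈ univ.erase q, Function.update v q w j (i j) = ∏ j ∈ univ.erase q, v j (i j) :=
    Finset.prod_congr rfl fun j hj => by rw [Function.update_of_ne (Finset.ne_of_mem_erase hj)]
  rw [Finset.sum_ite_eq, if_pos (Finset.mem_univ _),
    ← Finset.mul_prod_erase univ _ (Finset.mem_univ q), Function.update_self, hoff]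
  ring

section Odeco

variable {p d : ℕ} {lams : Fin d → ℝ} {u : Fin p → Fin d → Fin d → ℝ}
  {T : (Fin p → Fin d) → ℝ}

lemma tInner_eq_sum_prod_dotProduct (hT : ∀ i, T i = ∑ k, lams k * ∏ q, u q k (i q))
    (x : Fin p → Fin d → ℝ) : tInner T x = ∑ k, lams k * ∏ q, u q k ⬝ᵥ x q := by
  unfold tInner
  simp only [hT, Finset.sum_mul]
  rw [Finset.sum_comm]
  refine Finset.sum_congr rfl fun k _ => ?_
  simp only [dotProduct]
  rw [Finset.prod_univ_sum, Fintype.piFinset_univ, Finset.mul_sum]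
  refine Finset.sum_congr rfl fun i _ => ?_
  rw [mul_assoc, ← Finset.prod_mul_distrib]

lemma dotProduct_contractExcept_of_odeco
    (hu : ∀ q k l, u q k ⬝ᵥ u q l = if k = l then 1 else 0)
    (hT : ∀ i, T i = ∑ k, lams k * ∏ q, u q k (i q)) (x : Fin p → Fin d → ℝ) (q : Fin p)
    (k : Fin d) :
    u q k ⬝ᵥ contractExcept T x q = lams k * ∏ j ∈ univ.erase q, u j k ⬝ᵥ x j := by
  rw [dotProduct_contractExcept, tInner_eq_sum_prod_dotProduct hT,
    Fintype.sum_eq_single k fun l hlk => ?_]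
  · rw [← Finset.mul_prod_erase univ _ (Finset.mem_univ q), Function.update_self, hu,
      if_pos rfl, one_mul]
    exact congrArg _ (Finset.prod_congr rfl fun j hj => by
      rw [Function.update_of_ne (Finset.ne_of_mem_erase hj)])
  · rw [Finset.prod_eq_zero (Finset.mem_univ q) (by rw [Function.update_self, hu, if_neg hlk]),
      mul_zero]

lemma mul_sq_dotProduct_eq_of_critical
    (hu : ∀ q k l, u q k ⬝ᵥ u q l = if k = l then 1 else 0)
    (hT : ∀ i, T i = ∑ k, lams k * ∏ q, u q k (i q)) {a : Fin p → Fin d → ℝ} {lam : ℝ}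
    (hcrit : ∀ q m, contractExcept T a q m = lam * a q m) (q : Fin p) (k : Fin d) :
    lam * (u q k ⬝ᵥ a q) ^ 2 = lams k * ∏ j, u j k ⬝ᵥ a j := by
  have hcoeff : lams k * ∏ j ∈ univ.erase q, u j k ⬝ᵥ a j = lam * (u q k ⬝ᵥ a q) := by
    rw [← dotProduct_contractExcept_of_odeco hu hT, show contractExcept T a q = lam • a q
      from funext (hcrit q), dotProduct_smul, smul_eq_mul]
  rw [← Finset.mul_prod_erase univ _ (Finset.mem_univ q), mul_left_comm, hcoeff]
  ring

lemma tInner_rescale (hu : ∀ q k l, u q k ⬝ᵥ u q l = if k = l then 1 else 0)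
    (hT : ∀ i, T i = ∑ k, lams k * ∏ q, u q k (i q)) (σ : Fin d → ℝ) (a : Fin p → Fin d → ℝ) :
    tInner T (fun q => rescale (u q) σ (a q)) = ∑ k, σ k ^ p * (lams k * ∏ q, u q k ⬝ᵥ a q) := by
  rw [tInner_eq_sum_prod_dotProduct hT]
  refine Finset.sum_congr rfl fun k _ => ?_
  rw [Finset.prod_congr rfl fun q _ => dotProduct_rescale (hu q) σ (a q) k,
    Finset.prod_mul_distrib, Finset.prod_const, Finset.card_univ, Fintype.card_fin]
  ring

end Odeco

theorem stmt12_general (p d : ℕ) (hp : 3 ≤ p)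
    (lams : Fin d → ℝ)
    (u : Fin p → Fin d → Fin d → ℝ)
    (hu : ∀ q k l, (∑ j, u q k j * u q l j) = if k = l then 1 else 0)
    (T : (Fin p → Fin d) → ℝ)
    (hT : ∀ i, T i = ∑ k, lams k * ∏ q, u q k (i q))
    (a : Fin p → Fin d → ℝ) (haunit : ∀ q, ∑ m, a q m ^ 2 = 1)
    (lam : ℝ) (hlam : 0 < lam)
    (hcrit : ∀ q m, contractExcept T a q m = lam * a q m)
    (hS : ∃ k l : Fin d, k ≠ l ∧
      lams k * ∏ q, (∑ m, u q k m * a q m) ≠ 0 ∧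
      lams l * ∏ q, (∑ m, u q l m * a q m) ≠ 0) :
    ∀ ε > (0 : ℝ), ∃ b : Fin p → Fin d → ℝ,
      (∀ q, ∑ m, b q m ^ 2 = 1) ∧
      (∀ q, ∑ m, (b q m - a q m) ^ 2 < ε) ∧
      tInner T a < tInner T b := by
  intro ε hε
  obtain ⟨k, l, hkl, hk, hl⟩ := hS
  set w : Fin d → ℝ := fun k => lams k * ∏ q, u q k ⬝ᵥ a q
  have hweight : ∀ q i, lam * (u q i ⬝ᵥ a q) ^ 2 = w i :=
    mul_sq_dotProduct_eq_of_critical hu hT hcrit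
  have hw i : 0 ≤ w i := hweight ⟨0, by omega⟩ i ▸ by positivity
  have hsum_sq (f : Fin d → ℝ) (q : Fin p) :
      ∑ i, f i * (u q i ⬝ᵥ a q) ^ 2 = (∑ i, f i * w i) / lam := by
    simp only [← hweight q, Finset.sum_div, mul_left_comm _ lam, mul_div_cancel_left₀ _ hlam.ne']
  obtain ⟨σ, hσ0, hσk, hbal, hclose⟩ :=
    exists_balanced_rescaling hkl ((hw k).lt_of_ne' hk) ((hw l).lt_of_ne' hl) (mul_pos hε hlam)
  refine ⟨fun q => rescale (u q) σ (a q), fun q => ?_, fun q => ?_, ?_⟩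
  · have hnorm := rescale_dotProduct_self (hu q) σ (a q)
    have ha : a q ⬝ᵥ a q = 1 := by simpa [dotProduct, sq] using haunit q
    rw [hsum_sq, hbal, zero_div, add_zero, ha] at hnorm
    simpa [dotProduct, sq] using hnorm
  · have hdist := (div_lt_iff₀ hlam).mpr hclose
    rw [← hsum_sq, ← rescale_sub_dotProduct_self (hu q)] at hdist
    simpa [dotProduct, sq] using hdist
  · rw [tInner_rescale hu hT, tInner_eq_sum_prod_dotProduct hT, ← sub_pos,
      ← Finset.sum_sub_distrib]
    simpa [sub_one_mul] using
      sum_pow_sub_one_mul_pos hw hσ0 hbal ((hw k).lt_of_ne' hk) hσk (by omega : 2 < p)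

/-- Let `T = ∑_k λ_k u_k^{(1)} ⊗ ⋯ ⊗ u_k^{(p)}` be odeco (`p ≥ 3`) and let
`(a^{(1)},…,a^{(p)})` be a critical point of `F = ⟨T, a^{(1)} ⊗ ⋯ ⊗ a^{(p)}⟩` on the product
of unit spheres with Lagrange multiplier `λ > 0`. If the set
`S = {k : λ_k ∏_q ⟨u_k^{(q)}, a^{(q)}⟩ ≠ 0}` has at least two elements, then
`(a^{(1)},…,a^{(p)})` is not a local maximum of `F`: arbitrarily close feasible points have a
strictly larger value of `F`. -/
theorem stmt12 (p d : ℕ) (hp : 3 ≤ p)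
    (lams : Fin d → ℝ) (hlams : ∀ k, 0 ≤ lams k)
    (u : Fin p → Fin d → Fin d → ℝ)
    (hu : ∀ q k l, (∑ j, u q k j * u q l j) = if k = l then 1 else 0)
    (T : (Fin p → Fin d) → ℝ)
    (hT : ∀ i, T i = ∑ k, lams k * ∏ q, u q k (i q))
    (a : Fin p → Fin d → ℝ) (haunit : ∀ q, ∑ m, a q m ^ 2 = 1)
    (lam : ℝ) (hlam : 0 < lam)
    (hcrit : ∀ q m, contractExcept T a q m = lam * a q m)
    (hS : ∃ k l : Fin d, k ≠ l ∧
      lams k * ∏ q, (∑ m, u q k m * a q m) ≠ 0 ∧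
      lams l * ∏ q, (∑ m, u q l m * a q m) ≠ 0) :
    ∀ ε > (0 : ℝ), ∃ b : Fin p → Fin d → ℝ,
      (∀ q, ∑ m, b q m ^ 2 = 1) ∧
      (∀ q, ∑ m, (b q m - a q m) ^ 2 < ε) ∧
      tInner T a < tInner T b :=
  stmt12_general p d hp lams u hu T hT a haunit lam hlam hcrit hS
end

section
/- Let $\mathscr{T}$ be an odeco tensor with decomposition $\mathscr{T}=\sum_{k=1}^d\lambda_k u_k^{(1)}\otimes\cdots\otimes u_k^{(p)}$, $p\ge 3$, $\lambda_k>0$ for all $k$. Then for every $k$, the tuple $(u_k^{(1)},\ldots,u_k^{(p)})$ is a local maximum of $F(a^{(1)},\ldots,a^{(p)})=|\langle\mathscr{T},a^{(1)}\otimes\cdots\otimes a^{(p)}\rangle|$ over $S^{d_1-1}\times\cdots\times S^{d_p-1}$. -/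
open Finset Real

/-! Expanding `T`, `⟨T, b⁽¹⁾ ⊗ ⋯ ⊗ b⁽ᵖ⁾⟩ = ∑ₗ λₗ ∏_q c_{q,l}` with `c_{q,l} = ⟨u_l⁽q⁾, b⁽q⁾⟩`,
which equals `λₖ` at `b = u_k`. All `|c_{q,l}| ≤ 1`, so three modes suffice (this is where
`p ≥ 3` enters): `|∏_q c_{q,l}| ≤ |c_{3,l}| |c_{1,l} c_{2,l}|`. For `l ≠ k` orthogonality gives
`|c_{3,l}| ≤ ‖b⁽³⁾ - u_k⁽³⁾‖`, so near `u_k` every weight `λₗ |c_{3,l}|` is at most `λₖ`; AM-GM and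
Bessel's inequality in the first two modes then bound the sum by `λₖ`. -/

section Orthonormal

variable {ι n : Type*} [Fintype ι] [Fintype n] {u : ι → n → ℝ}

theorem sum_sq_sum_mul_le_sum_sq [DecidableEq ι]
    (hu : ∀ k l, ∑ j, u k j * u l j = if k = l then 1 else 0) (x : n → ℝ) :
    ∑ l, (∑ j, u l j * x j) ^ 2 ≤ ∑ j, x j ^ 2 := by
  have hon : Orthonormal ℝ fun l => WithLp.toLp 2 (u l) := by
    rw [orthonormal_iff_ite]
    intro k l
    simp only [EuclideanSpace.inner_toLp_toLp, dotProduct, star_trivial, hu l k, eq_comm]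
  have := hon.sum_inner_products_le (s := univ) (WithLp.toLp 2 x)
  simpa [EuclideanSpace.inner_toLp_toLp, dotProduct, EuclideanSpace.real_norm_sq_eq,
    mul_comm] using this

theorem sq_sum_mul_le_sum_sq [DecidableEq ι]
    (hu : ∀ k l, ∑ j, u k j * u l j = if k = l then 1 else 0) (x : n → ℝ) (l : ι) :
    (∑ j, u l j * x j) ^ 2 ≤ ∑ j, x j ^ 2 :=
  (single_le_sum (fun m _ => sq_nonneg (∑ j, u m j * x j)) (mem_univ l)).trans
    (sum_sq_sum_mul_le_sum_sq hu x)

theorem sq_sum_mul_le_sum_sq_sub_of_ne [DecidableEq ι]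
    (hu : ∀ k l, ∑ j, u k j * u l j = if k = l then 1 else 0) (x : n → ℝ) {k l : ι}
    (hlk : l ≠ k) :
    (∑ j, u l j * x j) ^ 2 ≤ ∑ j, (x j - u k j) ^ 2 := by
  have hshift : ∑ j, u l j * x j = ∑ j, u l j * (x j - u k j) := by
    simp only [mul_sub, sum_sub_distrib, hu l k, if_neg hlk, sub_zero]
  rw [hshift]
  exact sq_sum_mul_le_sum_sq hu _ l

theorem abs_sum_mul_le_one [DecidableEq ι]
    (hu : ∀ k l, ∑ j, u k j * u l j = if k = l then 1 else 0) {x : n → ℝ}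
    (hx : ∑ j, x j ^ 2 = 1) (l : ι) :
    |∑ j, u l j * x j| ≤ 1 :=
  abs_le_of_sq_le_sq ((hx ▸ sq_sum_mul_le_sum_sq hu x l).trans_eq (one_pow 2).symm) zero_le_one

theorem mul_abs_sum_mul_le_of_sum_sq_sub_lt [DecidableEq ι]
    (hu : ∀ k l, ∑ j, u k j * u l j = if k = l then 1 else 0) {lam : ι → ℝ}
    (hlam : ∀ l, 0 < lam l) {x : n → ℝ} (hx : ∑ j, x j ^ 2 = 1) {k : ι}
    (hxk : ∑ j, (x j - u k j) ^ 2 < (lam k / ∑ l, lam l) ^ 2) (l : ι) :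
    lam l * |∑ j, u l j * x j| ≤ lam k := by
  rcases eq_or_ne l k with rfl | hlk
  · exact mul_le_of_le_one_right (hlam l).le (abs_sum_mul_le_one hu hx l)
  have hS : 0 < ∑ l, lam l := sum_pos (fun l _ => hlam l) ⟨k, mem_univ k⟩
  have hsmall : |∑ j, u l j * x j| ≤ lam k / ∑ l, lam l := (abs_lt_of_sq_lt_sq
    ((sq_sum_mul_le_sum_sq_sub_of_ne hu x hlk).trans_lt hxk) (div_pos (hlam k) hS).le).le
  calc lam l * |∑ j, u l j * x j| ≤ (∑ l, lam l) * (lam k / ∑ l, lam l) :=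
        mul_le_mul (single_le_sum (fun l _ => (hlam l).le) (mem_univ l)) hsmall
          (abs_nonneg _) hS.le
    _ = lam k := mul_div_cancel₀ _ hS.ne'

end Orthonormal

theorem sum_mul_prod_eq_prod_sum_mul {ι : Type*} [Fintype ι] [DecidableEq ι] {κ : ι → Type*}
    [∀ q, Fintype (κ q)] (x a : ∀ q, κ q → ℝ) :
    ∑ i : ∀ q, κ q, (∏ q, x q (i q)) * ∏ q, a q (i q) = ∏ q, ∑ j, x q j * a q j := by
  simp only [← prod_mul_distrib, Fintype.prod_sum]

theorem sum_mul_prod_eq_sum_mul_prod_sum_mul {ι ρ : Type*} [Fintype ι] [DecidableEq ι]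
    [Fintype ρ] {κ : ι → Type*} [∀ q, Fintype (κ q)] (lam : ρ → ℝ) (u : ∀ q, ρ → κ q → ℝ)
    (a : ∀ q, κ q → ℝ) :
    ∑ i : ∀ q, κ q, (∑ l, lam l * ∏ q, u q l (i q)) * ∏ q, a q (i q) =
      ∑ l, lam l * ∏ q, ∑ j, u q l j * a q j := by
  simp only [sum_mul, mul_assoc]
  rw [sum_comm]
  simp only [← mul_sum, sum_mul_prod_eq_prod_sum_mul]

theorem sum_mul_prod_sum_mul_self {ι ρ : Type*} [Fintype ι] [Nonempty ι] [Fintype ρ]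
    [DecidableEq ρ] {κ : ι → Type*} [∀ q, Fintype (κ q)] (lam : ρ → ℝ) (u : ∀ q, ρ → κ q → ℝ)
    (hu : ∀ q k l, ∑ j, u q k j * u q l j = if k = l then 1 else 0) (k : ρ) :
    ∑ l, lam l * ∏ q, ∑ j, u q l j * u q k j = lam k := by
  simp [hu, prod_ite_irrel]

theorem sum_mul_abs_mul_le {ι : Type*} (s : Finset ι) (w x y : ι → ℝ) {M : ℝ} (hM : 0 ≤ M)
    (hw : ∀ l ∈ s, w l ≤ M) (hx : ∑ l ∈ s, x l ^ 2 ≤ 1) (hy : ∑ l ∈ s, y l ^ 2 ≤ 1) :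
    ∑ l ∈ s, w l * |x l * y l| ≤ M := by
  have hterm : ∀ l ∈ s, w l * |x l * y l| ≤ M / 2 * (x l ^ 2 + y l ^ 2) := by
    intro l hl
    have amgm : 2 * |x l * y l| ≤ x l ^ 2 + y l ^ 2 := by
      rw [abs_mul, ← sq_abs (x l), ← sq_abs (y l), ← mul_assoc]
      exact two_mul_le_add_sq |x l| |y l|
    nlinarith [mul_le_mul_of_nonneg_right (hw l hl) (abs_nonneg (x l * y l))]
  calc ∑ l ∈ s, w l * |x l * y l| ≤ ∑ l ∈ s, M / 2 * (x l ^ 2 + y l ^ 2) := sum_le_sum hterm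
    _ = M / 2 * (∑ l ∈ s, x l ^ 2 + ∑ l ∈ s, y l ^ 2) := by rw [← mul_sum, sum_add_distrib]
    _ ≤ M / 2 * (1 + 1) := by gcongr
    _ = M := by ring

theorem abs_prod_le_abs_mul_abs_mul {m : ℕ} (x : Fin (m + 3) → ℝ) (hx : ∀ q, |x q| ≤ 1) :
    |∏ q, x q| ≤ |x 2| * |x 0 * x 1| := by
  have hrest : ∏ q : Fin m, |x q.succ.succ.succ| ≤ 1 :=
    prod_le_one (fun q _ => abs_nonneg _) fun q _ => hx _
  calc |∏ q, x q| = |x 0| * (|x 1| * (|x 2| * ∏ q : Fin m, |x q.succ.succ.succ|)) := by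
        simp only [Fin.prod_univ_succ, abs_mul, abs_prod]; rfl
    _ ≤ |x 0| * (|x 1| * (|x 2| * 1)) := by gcongr
    _ = |x 2| * |x 0 * x 1| := by rw [abs_mul]; ring

/-- Let `T = ∑_{k=1}^r λ_k u_k^{(1)} ⊗ ⋯ ⊗ u_k^{(p)}` be an odeco tensor (`p ≥ 3`, `λ_k > 0`
for all `k`, orthonormal modes). Then for every `k`, the tuple `(u_k^{(1)},…,u_k^{(p)})` is a
local maximum of `F(a^{(1)},…,a^{(p)}) = |⟨T, a^{(1)} ⊗ ⋯ ⊗ a^{(p)}⟩|` over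
`S^{d_1-1} × ⋯ × S^{d_p-1}`. -/
theorem stmt13 (p r : ℕ) (hp : 3 ≤ p) (d : Fin p → ℕ)
    (lam : Fin r → ℝ) (hlam : ∀ k, 0 < lam k)
    (u : (q : Fin p) → Fin r → Fin (d q) → ℝ)
    (hu : ∀ q k l, (∑ j, u q k j * u q l j) = if k = l then 1 else 0)
    (T : ((q : Fin p) → Fin (d q)) → ℝ)
    (hT : ∀ i, T i = ∑ k, lam k * ∏ q, u q k (i q))
    (k : Fin r) :
    ∃ ε > (0 : ℝ), ∀ b : (q : Fin p) → Fin (d q) → ℝ,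
      (∀ q, ∑ j, b q j ^ 2 = 1) →
      (∀ q, ∑ j, (b q j - u q k j) ^ 2 < ε) →
      |∑ i : (q : Fin p) → Fin (d q), T i * ∏ q, b q (i q)| ≤
        |∑ i : (q : Fin p) → Fin (d q), T i * ∏ q, u q k (i q)| := by
  obtain ⟨m, rfl⟩ : ∃ m, p = m + 3 := ⟨p - 3, by omega⟩
  have hS : 0 < ∑ l, lam l := sum_pos (fun l _ => hlam l) ⟨k, mem_univ k⟩
  refine ⟨(lam k / ∑ l, lam l) ^ 2, pow_pos (div_pos (hlam k) hS) 2, fun b hb hclose => ?_⟩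
  simp only [hT, sum_mul_prod_eq_sum_mul_prod_sum_mul, sum_mul_prod_sum_mul_self lam u hu,
    abs_of_pos (hlam k)]
  set c : ∀ q, Fin r → ℝ := fun q l => ∑ j, u q l j * b q j
  have hbessel : ∀ q, ∑ l, c q l ^ 2 ≤ 1 := fun q => hb q ▸ sum_sq_sum_mul_le_sum_sq (hu q) _
  calc |∑ l, lam l * ∏ q, c q l| ≤ ∑ l, lam l * |∏ q, c q l| := by
        refine (abs_sum_le_sum_abs _ _).trans_eq (sum_congr rfl fun l _ => ?_)
        rw [abs_mul, abs_of_pos (hlam l)]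
    _ ≤ ∑ l, lam l * |c 2 l| * |c 0 l * c 1 l| := sum_le_sum fun l _ => by
        rw [mul_assoc]
        exact mul_le_mul_of_nonneg_left
          (abs_prod_le_abs_mul_abs_mul _ fun q => abs_sum_mul_le_one (hu q) (hb q) l) (hlam l).le
    _ ≤ lam k := sum_mul_abs_mul_le _ _ _ _ (hlam k).le
        (fun l _ => mul_abs_sum_mul_le_of_sum_sq_sub_lt (hu 2) hlam (hb 2) (hclose 2) l)
        (hbessel 0) (hbessel 1)
end

section
/- Let $\tilde{\mathscr{T}}=\sum_{k=1}^d\tilde\lambda_k\tilde u_k^{(1)}\otimes\cdots\otimes\tilde u_k^{(p)}$ be odeco with $\tilde\lambda_k\ge 0$, let $u^{(2)},\ldots,u^{(p)}$ be unit vectors, let $j\in[d]$, and suppose $\tilde\lambda_k\le\Lambda$ for all $k\ne j$. Then for every unit vector $v$ orthogonal to $\tilde u_j^{(1)}$, $|\langle \tilde{\mathscr{T}}\times_2 u^{(2)}\cdots\times_p u^{(p)},\,v\rangle|\le\Lambda\prod_{q=2}^p\sin\angle(u^{(q)},\tilde u_j^{(q)})$. -/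
/-!
Pairing the contraction with `v` is the full contraction of `T̃` against `v, u⁽²⁾, …, u⁽ᵖ⁾`,
which for an odeco tensor equals `∑ₖ λ̃ₖ ∏_q c_{q,k}` with `c_{q,k}` the coordinates of the
`q`-th vector in the orthonormal basis `(ũₖ⁽ᵠ⁾)ₖ`. By Parseval each `(c_{q,k})ₖ` is a unit
vector, and `c_{1,j} = 0` since `v ⊥ ũⱼ⁽¹⁾`, so only `k ≠ j` contributes. On `k ≠ j` the
off-`j` mass of mode `q` is `1 - c_{q,j}² = sin²∠(u⁽ᵠ⁾, ũⱼ⁽ᵠ⁾)`: bounding all but two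
modes coordinatewise and applying Cauchy–Schwarz to the remaining two gives the claim.
-/

open Finset Real

open Matrix in
lemma sum_sq_sum_mul_eq_of_orthonormal_rows {n : Type*} [Fintype n] [DecidableEq n]
    (A : n → n → ℝ) (hA : ∀ k l, ∑ m, A k m * A l m = if k = l then 1 else 0) (w : n → ℝ) :
    ∑ k, (∑ m, w m * A k m) ^ 2 = ∑ m, w m ^ 2 := by
  set M : Matrix n n ℝ := Matrix.of A
  have hMMt : M * M.transpose = 1 := by
    ext k l
    simpa [M, Matrix.mul_apply, Matrix.one_apply] using hA k l
  have hMtM : M.transpose * M = 1 := mul_eq_one_comm.mp hMMt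
  have hMw : (fun k => ∑ m, w m * A k m) = M *ᵥ w := by
    ext k
    simp [M, Matrix.mulVec, dotProduct, mul_comm]
  calc ∑ k, (∑ m, w m * A k m) ^ 2 = (M *ᵥ w) ⬝ᵥ (M *ᵥ w) := by
        rw [← hMw]; simp [dotProduct, sq]
    _ = w ⬝ᵥ w := by
        rw [Matrix.dotProduct_mulVec, ← Matrix.mulVec_transpose, Matrix.mulVec_mulVec, hMtM,
          Matrix.one_mulVec, dotProduct_comm]
    _ = ∑ m, w m ^ 2 := by simp [dotProduct, sq]

lemma sum_contractExcept_mul {p d : ℕ} (T : (Fin p → Fin d) → ℝ) (u : Fin p → Fin d → ℝ)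
    (q : Fin p) (v : Fin d → ℝ) :
    ∑ m, contractExcept T u q m * v m = ∑ i, T i * ∏ r, Function.update u q v r (i r) := by
  simp only [contractExcept, Finset.sum_mul, ite_mul, zero_mul]
  rw [Finset.sum_comm]
  refine Finset.sum_congr rfl fun i _ => ?_
  have hprod :
      ∏ r, Function.update u q v r (i r) = v (i q) * ∏ r ∈ univ.erase q, u r (i r) := by
    rw [← Finset.mul_prod_erase _ _ (Finset.mem_univ q), Function.update_self]
    congr 1
    exact Finset.prod_congr rfl fun r hr =>
      congrFun (Function.update_of_ne (Finset.ne_of_mem_erase hr) v u) (i r)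
  rw [Finset.sum_ite_eq, if_pos (Finset.mem_univ _), hprod]
  ring

lemma sum_odeco_mul_prod {ι κ K : Type*} [Fintype ι] [DecidableEq ι] [Fintype κ] [Fintype K]
    (lam : K → ℝ) (A : ι → K → κ → ℝ) (w : ι → κ → ℝ) :
    ∑ i : ι → κ, (∑ k, lam k * ∏ q, A q k (i q)) * ∏ q, w q (i q) =
      ∑ k, lam k * ∏ q, ∑ m, w q m * A q k m := by
  simp_rw [Fintype.prod_sum, Finset.sum_mul, Finset.mul_sum]
  rw [Finset.sum_comm]
  refine Finset.sum_congr rfl fun k _ => Finset.sum_congr rfl fun i _ => ?_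
  rw [mul_assoc, ← Finset.prod_mul_distrib]
  simp only [mul_comm]

lemma sum_prod_abs_le_prod {ι K : Type*} [Fintype ι] [DecidableEq ι] [Nontrivial ι]
    (S : Finset K) (c : ι → K → ℝ) (s : ι → ℝ) (hs : ∀ q, 0 ≤ s q)
    (hc : ∀ q, ∑ k ∈ S, c q k ^ 2 ≤ s q ^ 2) :
    ∑ k ∈ S, ∏ q, |c q k| ≤ ∏ q, s q := by
  obtain ⟨q₀, q₁, hq⟩ := exists_pair_ne ι
  have hq₁ : q₁ ∈ univ.erase q₀ := Finset.mem_erase.mpr ⟨hq.symm, Finset.mem_univ _⟩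
  set R := (univ.erase q₀).erase q₁
  have split : ∀ f : ι → ℝ, ∏ q, f q = f q₀ * f q₁ * ∏ q ∈ R, f q := fun f => by
    rw [← Finset.mul_prod_erase _ _ (Finset.mem_univ q₀), ← Finset.mul_prod_erase _ _ hq₁,
      mul_assoc]
  have hcoord : ∀ q, ∀ k ∈ S, |c q k| ≤ s q := fun q k hk =>
    abs_le_of_sq_le_sq ((Finset.single_le_sum (fun k _ => sq_nonneg (c q k)) hk).trans (hc q))
      (hs q)
  have cauchy_schwarz : ∑ k ∈ S, |c q₀ k| * |c q₁ k| ≤ s q₀ * s q₁ := by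
    refine (Real.sum_mul_le_sqrt_mul_sqrt S _ _).trans ?_
    simp only [sq_abs]
    exact mul_le_mul (Real.sqrt_le_iff.mpr ⟨hs _, hc _⟩) (Real.sqrt_le_iff.mpr ⟨hs _, hc _⟩)
      (Real.sqrt_nonneg _) (hs _)
  calc ∑ k ∈ S, ∏ q, |c q k|
      ≤ ∑ k ∈ S, |c q₀ k| * |c q₁ k| * ∏ q ∈ R, s q := by
        refine Finset.sum_le_sum fun k hk => ?_
        rw [split]
        gcongr with q
        exact hcoord q k hk
    _ = (∑ k ∈ S, |c q₀ k| * |c q₁ k|) * ∏ q ∈ R, s q := (Finset.sum_mul ..).symm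
    _ ≤ s q₀ * s q₁ * ∏ q ∈ R, s q := by gcongr; exact Finset.prod_nonneg fun q _ => hs q
    _ = ∏ q, s q := (split s).symm

lemma abs_sum_mul_prod_le {ι K : Type*} [Fintype ι] [DecidableEq ι] [Nontrivial ι]
    (S : Finset K) (a : K → ℝ) (Λ : ℝ) (ha : ∀ k ∈ S, 0 ≤ a k ∧ a k ≤ Λ) (hΛ : 0 ≤ Λ)
    (c : ι → K → ℝ) (s : ι → ℝ) (hs : ∀ q, 0 ≤ s q)
    (hc : ∀ q, ∑ k ∈ S, c q k ^ 2 ≤ s q ^ 2) :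
    |∑ k ∈ S, a k * ∏ q, c q k| ≤ Λ * ∏ q, s q :=
  calc |∑ k ∈ S, a k * ∏ q, c q k|
      ≤ ∑ k ∈ S, a k * ∏ q, |c q k| := by
        refine (Finset.abs_sum_le_sum_abs _ _).trans_eq (Finset.sum_congr rfl fun k hk => ?_)
        rw [abs_mul, abs_of_nonneg (ha k hk).1, Finset.abs_prod]
    _ ≤ ∑ k ∈ S, Λ * ∏ q, |c q k| := by
        gcongr with k hk
        exact (ha k hk).2
    _ ≤ Λ * ∏ q, s q := by
        rw [← Finset.mul_sum]
        exact mul_le_mul_of_nonneg_left (sum_prod_abs_le_prod S c s hs hc) hΛ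

/-- Let `T̃ = ∑_k λ̃_k ũ_k^{(1)} ⊗ ⋯ ⊗ ũ_k^{(p)}` be odeco with `λ̃_k ≥ 0`, let
`u^{(2)},…,u^{(p)}` be unit vectors, fix `j`, and suppose `λ̃_k ≤ Λ` for all `k ≠ j`. Then for
every unit vector `v ⊥ ũ_j^{(1)}`,
`|⟨T̃ ×₂ u^{(2)} ⋯ ×_p u^{(p)}, v⟩| ≤ Λ ∏_{q=2}^p sin∠(u^{(q)}, ũ_j^{(q)})`. -/
theorem stmt16 (p d : ℕ) (hp : 3 ≤ p)
    (tlam : Fin d → ℝ) (htlam : ∀ k, 0 ≤ tlam k)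
    (tu : Fin p → Fin d → Fin d → ℝ)
    (htu : ∀ q k l, (∑ m, tu q k m * tu q l m) = if k = l then 1 else 0)
    (tT : (Fin p → Fin d) → ℝ)
    (htT : ∀ i, tT i = ∑ k, tlam k * ∏ q, tu q k (i q))
    (u : Fin p → Fin d → ℝ)
    (hu : ∀ q : Fin p, q ≠ ⟨0, by omega⟩ → ∑ m, u q m ^ 2 = 1)
    (j : Fin d) (Λ : ℝ)
    (hΛ : ∀ k, k ≠ j → tlam k ≤ Λ)
    (v : Fin d → ℝ) (hv : ∑ m, v m ^ 2 = 1)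
    (hperp : (∑ m, v m * tu ⟨0, by omega⟩ j m) = 0) :
    |∑ m, contractExcept tT u ⟨0, by omega⟩ m * v m| ≤
      Λ * ∏ q ∈ Finset.univ.erase (⟨0, by omega⟩ : Fin p),
        Real.sqrt (1 - (∑ m, u q m * tu q j m) ^ 2) := by
  set q₀ : Fin p := ⟨0, by omega⟩
  have : Nontrivial (Fin p) := Fin.nontrivial_iff_two_le.mpr (by omega)
  set w := Function.update u q₀ v
  set c : Fin p → Fin d → ℝ := fun q k => ∑ m, w q m * tu q k m
  have hc_perp : c q₀ j = 0 := by simpa [c, w] using hperp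
  have hc_unit : ∀ q, ∑ k, c q k ^ 2 = 1 := fun q => by
    rw [sum_sq_sum_mul_eq_of_orthonormal_rows _ (htu q)]
    by_cases hq : q = q₀
    · simpa [w, hq] using hv
    · simpa [w, hq] using hu q hq
  have hc_off : ∀ q, ∑ k ∈ univ.erase j, c q k ^ 2 = 1 - c q j ^ 2 := fun q => by
    rw [Finset.sum_erase_eq_sub (Finset.mem_univ j), hc_unit]
  have hΛ_nonneg : 0 ≤ Λ := by
    obtain ⟨k, hk, -⟩ : ∃ k ∈ univ.erase j, c q₀ k ^ 2 ≠ 0 :=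
      Finset.exists_ne_zero_of_sum_ne_zero (by simp [hc_off, hc_perp])
    exact (htlam k).trans (hΛ k (Finset.ne_of_mem_erase hk))
  have hexpand :
      ∑ m, contractExcept tT u q₀ m * v m = ∑ k ∈ univ.erase j, tlam k * ∏ q, c q k := by
    rw [sum_contractExcept_mul]
    simp_rw [htT]
    rw [sum_odeco_mul_prod]
    exact (Finset.sum_erase _
      (mul_eq_zero_of_right _ (Finset.prod_eq_zero (mem_univ q₀) hc_perp))).symm
  calc |∑ m, contractExcept tT u q₀ m * v m|
      ≤ Λ * ∏ q, √(1 - c q j ^ 2) := by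
        rw [hexpand]
        refine abs_sum_mul_prod_le _ _ _ (fun k hk => ⟨htlam k, hΛ k (Finset.ne_of_mem_erase hk)⟩)
          hΛ_nonneg _ _ (fun q => Real.sqrt_nonneg _) fun q => ?_
        rw [Real.sq_sqrt (by rw [← hc_off]; positivity), hc_off]
    _ = Λ * ∏ q ∈ univ.erase q₀, √(1 - (∑ m, u q m * tu q j m) ^ 2) := by
        rw [← Finset.mul_prod_erase _ _ (Finset.mem_univ q₀), hc_perp, zero_pow two_ne_zero,
          sub_zero, Real.sqrt_one, one_mul]
        refine congrArg _ (Finset.prod_congr rfl fun q hq => ?_)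
        simp [c, w, Finset.ne_of_mem_erase hq]
end
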